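/- arXiv:2511.08956 — 7 statements merged into one kernel-verified Lean document; each statement's English description precedes it below -/
import Mathlib

section
/- Let d ≥ 1 and let j : (0,∞) → [0,∞) be nonincreasing and suppose there is c_j > 0 with j(2r) ≥ c_j·j(r) for all r > 0. Then there exists a constant C₂ > 0 depending only on c_j and d (one may take C₂ = ((2^d−1)·vol(B(0,1))·c_j)^{−1}) such that for all r > 0, r^{d+2}·j(r) ≤ C₂·r²·λ(r), where the inequality is read in the extended nonnegative reals. -/
open MeasureTheory Metric ENNReal

/-- Tail `λ(r) = ∫_{ℝ^d ∖ B(0,r)} j(|x|) dx` in `ℝ^d`. -/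
noncomputable def tailLam (d : ℕ) (j : ℝ → ℝ) (r : ℝ) : ℝ≥0∞ :=
  ∫⁻ x in (Metric.ball (0 : EuclideanSpace ℝ (Fin d)) r)ᶜ,
    ENNReal.ofReal (j ‖x‖)

theorem stmt1 (d : ℕ) (hd : 1 ≤ d) (j : ℝ → ℝ)
    (hnonneg : ∀ r : ℝ, 0 < r → 0 ≤ j r)
    (hmono : AntitoneOn j (Set.Ioi (0 : ℝ)))
    (cj : ℝ) (hcj : 0 < cj)
    (hdbl : ∀ r : ℝ, 0 < r → cj * j r ≤ j (2 * r)) :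
    ∃ C₂ : ℝ, 0 < C₂ ∧ ∀ r : ℝ, 0 < r →
      ENNReal.ofReal (r ^ (d + 2) * j r) ≤
        ENNReal.ofReal (C₂ * r ^ 2) * tailLam d j r := by
  haveI : Nontrivial (EuclideanSpace ℝ (Fin d)) := by
    have : Nonempty (Fin d) := ⟨⟨0, by omega⟩⟩
    infer_instance
  set ω : ℝ≥0∞ := volume (Metric.ball (0 : EuclideanSpace ℝ (Fin d)) 1) with hωdef
  have hω0 : ω ≠ 0 := (measure_ball_pos _ _ one_pos).ne'
  have hωtop : ω ≠ ⊤ := measure_ball_lt_top.ne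
  set ωr : ℝ := ω.toReal with hωrdef
  have hωr : 0 < ωr := ENNReal.toReal_pos hω0 hωtop
  have h2d : (0:ℝ) < 2 ^ d - 1 := by
    have : (1:ℝ) < 2 ^ d := one_lt_pow₀ (one_lt_two (α := ℝ)) (Nat.one_le_iff_ne_zero.mp hd)
    linarith
  refine ⟨(cj * (2 ^ d - 1) * ωr)⁻¹, by positivity, ?_⟩
  intro r hr
  set A := Metric.closedBall (0 : EuclideanSpace ℝ (Fin d)) (2 * r) \ Metric.ball 0 r with hAdef
  have hvolA : volume A = ENNReal.ofReal ((2 ^ d - 1) * r ^ d) * ω := by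
    have hsub : Metric.ball (0 : EuclideanSpace ℝ (Fin d)) r ⊆ Metric.closedBall 0 (2 * r) :=
      Metric.ball_subset_closedBall.trans (Metric.closedBall_subset_closedBall (by linarith))
    rw [hAdef, measure_diff hsub measurableSet_ball.nullMeasurableSet measure_ball_lt_top.ne,
      Measure.addHaar_closedBall _ _ (by linarith), Measure.addHaar_ball _ _ hr.le,
      finrank_euclideanSpace_fin, ← hωdef, ← ENNReal.sub_mul (fun _ _ => hωtop),
      ← ENNReal.ofReal_sub _ (by positivity)]
    congr 2
    rw [mul_pow]
    ring
  have hlow : ENNReal.ofReal (j (2 * r)) * volume A ≤ tailLam d j r := by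
    calc ENNReal.ofReal (j (2 * r)) * volume A
        = ∫⁻ _ in A, ENNReal.ofReal (j (2 * r)) := (setLIntegral_const _ _).symm
      _ ≤ ∫⁻ x in A, ENNReal.ofReal (j ‖x‖) := by
          refine setLIntegral_mono' (measurableSet_closedBall.diff measurableSet_ball) ?_
          intro x hx
          have hx1 : ‖x‖ ≤ 2 * r := by
            have := hx.1
            rwa [Metric.mem_closedBall, dist_zero_right] at this
          have hx2 : r ≤ ‖x‖ := by
            have := hx.2
            rw [Metric.mem_ball, dist_zero_right] at this
            linarith [not_lt.mp this]
          exact ENNReal.ofReal_le_ofReal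
            (hmono (Set.mem_Ioi.2 (lt_of_lt_of_le hr hx2))
              (Set.mem_Ioi.2 (by linarith)) hx1)
      _ ≤ tailLam d j r := by
          refine lintegral_mono_set ?_
          intro x hx
          exact hx.2
  have hjr : 0 ≤ j r := hnonneg r hr
  calc ENNReal.ofReal (r ^ (d + 2) * j r)
      = ENNReal.ofReal ((cj * (2 ^ d - 1) * ωr)⁻¹ * r ^ 2)
        * (ENNReal.ofReal (cj * j r) * ENNReal.ofReal ((2 ^ d - 1) * r ^ d) * ω) := by
        rw [← ENNReal.ofReal_toReal hωtop, ← hωrdef,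
          ← ENNReal.ofReal_mul (by positivity), ← ENNReal.ofReal_mul (by positivity),
          ← ENNReal.ofReal_mul (by positivity)]
        congr 1
        field_simp
        ring
    _ ≤ ENNReal.ofReal ((cj * (2 ^ d - 1) * ωr)⁻¹ * r ^ 2)
        * (ENNReal.ofReal (j (2 * r)) * volume A) := by
        rw [hvolA, ← mul_assoc (ENNReal.ofReal (j (2 * r)))]
        gcongr
        · exact hdbl r hr
    _ ≤ ENNReal.ofReal ((cj * (2 ^ d - 1) * ωr)⁻¹ * r ^ 2) * tailLam d j r := by
        gcongr
end

section
/- Let d ≥ 1 and let j : (0,∞) → [0,∞) be nonincreasing with ∫_{ℝ^d} min{1,|x|²} j(|x|) dx < ∞. Suppose there exist c₀, δ₀ > 0 with j(r) ≥ c₀·r^{−d} for all r ∈ (0, δ₀], and there exist C > 0, R ∈ (0, 1/e), α > 0 such that r^{d+2}·j(r) ≤ C·(log(1/s)/log(1/r))^{1+α}·s^{d+2}·j(s) for all 0 < s ≤ r ≤ R. Then there exist C' > 0 and δ > 0 such that λ(r) ≤ C'·r^d·j(r) for all r ∈ (0, δ]. -/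
/-!
Cut the complement of `B(0, r)` into the dyadic shells `2ᵏr ≤ |x| < 2ᵏ⁺¹r` below `R` and the
exterior of `B(0, R)`. On the `k`-th shell `j ≤ j(2ᵏr)`, and the scaling hypothesis with `s = r`
gives `(2ᵏr)ᵈ j(2ᵏr) ≤ C (log(1/r) / log(1/2ᵏr))^{1+α} 4⁻ᵏ rᵈ j(r)`. The logarithmic ratio is at
most `2` while `2ᵏ ≤ r^{-1/2}`, and beyond that it is at most `log(1/r) ≲ r^{-1/2} ≤ 2ᵏ`; either way
the shells contribute a geometric series `≲ rᵈ j(r)`. The exterior of `B(0, R)` has finite mass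
by the Lévy–Khintchine condition, and `rᵈ j(r) ≥ c₀` for `r ≤ δ₀` absorbs that constant.
-/

open MeasureTheory Metric ENNReal

open Real Set Finset

lemma rpow_mul_exp_neg_le {p : ℝ} (hp : 0 < p) {x : ℝ} (hx : 0 ≤ x) :
    x ^ p * exp (-(x / 2)) ≤ (2 * p) ^ p := by
  have hlin : x ≤ 2 * p * exp (x / (2 * p)) := by
    have := add_one_le_exp (x / (2 * p))
    rw [div_add_one (by positivity), div_le_iff₀ (by positivity)] at this
    linarith [exp_pos (x / (2 * p))]
  calc x ^ p * exp (-(x / 2))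
      ≤ (2 * p * exp (x / (2 * p))) ^ p * exp (-(x / 2)) := by gcongr
    _ = (2 * p) ^ p := by
      rw [mul_rpow (by positivity) (exp_pos _).le, ← exp_mul, mul_assoc, ← exp_add]
      field_simp
      simp

lemma div_rpow_mul_exp_sub_le {p a b : ℝ} (hp : 0 < p) (hb : 1 ≤ b) (hba : b ≤ a) :
    (a / b) ^ p * exp (b - a) ≤ 2 ^ p + (2 * p) ^ p := by
  have hb0 : 0 < b := by linarith
  have ha0 : 0 < a := by linarith
  have h2p : 0 < (2 * p) ^ p := by positivity
  have h2 : 0 < (2 : ℝ) ^ p := by positivity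
  rcases le_or_gt a (2 * b) with hab | hab
  · have hq : a / b ≤ 2 := (div_le_iff₀ hb0).2 (by linarith)
    have he : exp (b - a) ≤ 1 := exp_le_one_iff.2 (by linarith)
    calc (a / b) ^ p * exp (b - a) ≤ 2 ^ p * 1 := by gcongr
      _ ≤ 2 ^ p + (2 * p) ^ p := by linarith
  · have hq : a / b ≤ a := div_le_self ha0.le hb
    have he : b - a ≤ -(a / 2) := by linarith
    calc (a / b) ^ p * exp (b - a) ≤ a ^ p * exp (-(a / 2)) := by gcongr
      _ ≤ 2 ^ p + (2 * p) ^ p := by linarith [rpow_mul_exp_neg_le hp ha0.le]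

lemma pow_mul_le_of_log_ratio_scaling {d : ℕ} {C p r ρ a b : ℝ} (hp : 0 < p) (hC : 0 ≤ C)
    (hr : 0 < r) (hrρ : r ≤ ρ) (hρ : ρ < (exp 1)⁻¹) (hb : 0 ≤ b)
    (h : ρ ^ (d + 2) * a ≤ C * (Real.log (1 / r) / Real.log (1 / ρ)) ^ p * (r ^ (d + 2) * b)) :
    ρ ^ d * a ≤ C * (2 ^ p + (2 * p) ^ p) * (r / ρ) * (r ^ d * b) := by
  have hρ0 : 0 < ρ := hr.trans_le hrρ
  have hlogρ : 1 ≤ Real.log (1 / ρ) := by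
    rw [le_log_iff_exp_le (by positivity), one_div]
    exact (lt_inv_comm₀ hρ0 (exp_pos 1)).1 hρ |>.le
  have hlogr : Real.log (1 / ρ) ≤ Real.log (1 / r) :=
    log_le_log (by positivity) (one_div_le_one_div_of_le hr hrρ)
  have hratio := div_rpow_mul_exp_sub_le hp hlogρ hlogr
  rw [← log_div (by positivity) (by positivity), exp_log (by positivity),
    div_div_div_cancel_left' _ _ one_ne_zero] at hratio
  calc ρ ^ d * a = ρ ^ (d + 2) * a / ρ ^ 2 := by field_simp; ring
    _ ≤ C * (Real.log (1 / r) / Real.log (1 / ρ)) ^ p * (r ^ (d + 2) * b) / ρ ^ 2 := by gcongr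
    _ = C * ((Real.log (1 / r) / Real.log (1 / ρ)) ^ p * (r / ρ)) * (r / ρ) * (r ^ d * b) := by
      field_simp; ring
    _ ≤ C * (2 ^ p + (2 * p) ^ p) * (r / ρ) * (r ^ d * b) := by gcongr

section Tail

variable {d : ℕ} {j : ℝ → ℝ}

lemma tailLam_antitone : Antitone (tailLam d j) := fun _ _ h =>
  lintegral_mono_set (compl_subset_compl.2 (ball_subset_ball h))

lemma tailLam_le_mul_volume_add (hj : AntitoneOn j (Ioi 0)) {ρ : ℝ} (hρ : 0 < ρ) (ρ' : ℝ) :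
    tailLam d j ρ ≤
      ENNReal.ofReal (j ρ) * volume (ball (0 : EuclideanSpace ℝ (Fin d)) ρ') + tailLam d j ρ' := by
  have hann : ∫⁻ x in ball (0 : EuclideanSpace ℝ (Fin d)) ρ' \ ball 0 ρ, ENNReal.ofReal (j ‖x‖)
      ≤ ENNReal.ofReal (j ρ) * volume (ball (0 : EuclideanSpace ℝ (Fin d)) ρ') := by
    calc _ ≤ ∫⁻ _ in ball (0 : EuclideanSpace ℝ (Fin d)) ρ' \ ball 0 ρ, ENNReal.ofReal (j ρ) := by
          refine setLIntegral_mono' (measurableSet_ball.diff measurableSet_ball) fun x hx => ?_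
          have hρx : ρ ≤ ‖x‖ := by simpa using hx.2
          exact ENNReal.ofReal_le_ofReal (hj hρ (hρ.trans_le hρx) hρx)
      _ ≤ _ := by
          rw [setLIntegral_const]
          gcongr
          exact sdiff_subset
  calc tailLam d j ρ
      ≤ (∫⁻ x in ball (0 : EuclideanSpace ℝ (Fin d)) ρ' \ ball 0 ρ, ENNReal.ofReal (j ‖x‖))
        + tailLam d j ρ' :=
        (lintegral_mono_set fun x hx => (em (x ∈ ball 0 ρ')).imp (fun h => ⟨h, hx⟩) id).trans
          (lintegral_union_le _ _ _)
    _ ≤ _ := by gcongr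

lemma tailLam_le_sum_add_tailLam (hj : AntitoneOn j (Ioi 0)) {r : ℝ} (hr : 0 < r) (K : ℕ) :
    tailLam d j r ≤
      (∑ k ∈ range K, ENNReal.ofReal (j (2 ^ k * r)) *
        volume (ball (0 : EuclideanSpace ℝ (Fin d)) (2 ^ (k + 1) * r)))
      + tailLam d j (2 ^ K * r) := by
  induction K with
  | zero => simp
  | succ K ih =>
    refine ih.trans ?_
    rw [sum_range_succ, add_assoc, pow_succ, mul_right_comm]
    gcongr
    exact tailLam_le_mul_volume_add hj (by positivity) _

lemma sum_ofReal_mul_volume_ball_le (hj₀ : ∀ s, 0 < s → 0 ≤ j s) {r A : ℝ} {K : ℕ}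
    (hr : 0 < r) (hA₀ : 0 ≤ A)
    (hA : ∀ k < K, (2 ^ k * r) ^ d * j (2 ^ k * r) ≤ A * (1 / 2) ^ k) :
    ∑ k ∈ range K, ENNReal.ofReal (j (2 ^ k * r)) *
        volume (ball (0 : EuclideanSpace ℝ (Fin d)) (2 ^ (k + 1) * r))
      ≤ ENNReal.ofReal
          (2 ^ (d + 1) * A * (volume (ball (0 : EuclideanSpace ℝ (Fin d)) 1)).toReal) := by
  calc _ = ∑ k ∈ range K, ENNReal.ofReal (2 ^ d * ((2 ^ k * r) ^ d * j (2 ^ k * r))) *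
        volume (ball (0 : EuclideanSpace ℝ (Fin d)) 1) := by
        refine sum_congr rfl fun k _ => ?_
        rw [Measure.addHaar_ball_of_pos _ _ (by positivity), finrank_euclideanSpace_fin,
          ← mul_assoc, ← ENNReal.ofReal_mul (hj₀ _ (by positivity))]
        congr 2
        ring
    _ ≤ ∑ k ∈ range K, ENNReal.ofReal (2 ^ d * A * (1 / 2) ^ k) *
        volume (ball (0 : EuclideanSpace ℝ (Fin d)) 1) := by
        refine sum_le_sum fun k hk => ?_
        gcongr ENNReal.ofReal ?_ * _
        rw [mul_assoc]
        exact mul_le_mul_of_nonneg_left (hA k (mem_range.1 hk)) (by positivity)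
    _ = ENNReal.ofReal (2 ^ d * A * ∑ k ∈ range K, (1 / 2 : ℝ) ^ k) *
        volume (ball (0 : EuclideanSpace ℝ (Fin d)) 1) := by
        rw [← sum_mul, ← ENNReal.ofReal_sum_of_nonneg (fun _ _ => by positivity), mul_sum]
    _ ≤ _ := by
        rw [ENNReal.ofReal_mul' ENNReal.toReal_nonneg, ofReal_toReal measure_ball_lt_top.ne,
          pow_succ, mul_right_comm _ 2]
        gcongr
        exact sum_geometric_two_le K

lemma tailLam_ne_top (hj₀ : ∀ s, 0 < s → 0 ≤ j s)
    (hLK : ∫⁻ x : EuclideanSpace ℝ (Fin d), ENNReal.ofReal (min 1 (‖x‖ ^ 2) * j ‖x‖) < ⊤)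
    {R : ℝ} (hR : 0 < R) : tailLam d j R ≠ ⊤ := by
  have hm : 0 < min 1 (R ^ 2) := by positivity
  refine (lt_top_of_mul_ne_top_right ?_ (ENNReal.ofReal_pos.2 hm).ne').ne
  refine ne_top_of_le_ne_top hLK.ne ?_
  calc ENNReal.ofReal (min 1 (R ^ 2)) * tailLam d j R
      = ∫⁻ x in (ball (0 : EuclideanSpace ℝ (Fin d)) R)ᶜ,
          ENNReal.ofReal (min 1 (R ^ 2)) * ENNReal.ofReal (j ‖x‖) :=
        (lintegral_const_mul' _ _ ofReal_ne_top).symm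
    _ ≤ ∫⁻ x in (ball (0 : EuclideanSpace ℝ (Fin d)) R)ᶜ,
          ENNReal.ofReal (min 1 (‖x‖ ^ 2) * j ‖x‖) := by
        refine setLIntegral_mono' measurableSet_ball.compl fun x hx => ?_
        have hRx : R ≤ ‖x‖ := by simpa using hx
        rw [← ENNReal.ofReal_mul hm.le]
        gcongr
        exact hj₀ _ (hR.trans_le hRx)
    _ ≤ _ := setLIntegral_le_lintegral _ _

lemma tailLam_le_ofReal_mul_add_tailLam (hj₀ : ∀ s, 0 < s → 0 ≤ j s)
    (hj : AntitoneOn j (Ioi 0)) {C p R : ℝ} (hC : 0 ≤ C) (hp : 0 < p) (hR : R < (exp 1)⁻¹)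
    (hscale : ∀ s r : ℝ, 0 < s → s ≤ r → r ≤ R →
      r ^ (d + 2) * j r ≤
        C * (Real.log (1 / s) / Real.log (1 / r)) ^ p * (s ^ (d + 2) * j s))
    {r : ℝ} (hr : 0 < r) (hrR : r ≤ R) :
    tailLam d j r ≤
      ENNReal.ofReal (2 ^ (d + 1) * (C * (2 ^ p + (2 * p) ^ p) * (r ^ d * j r)) *
        (volume (ball (0 : EuclideanSpace ℝ (Fin d)) 1)).toReal) + tailLam d j R := by
  have hjr := hj₀ r hr
  obtain ⟨n, hnR, hRn⟩ := exists_nat_pow_near ((one_le_div hr).2 hrR) one_lt_two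
  rw [le_div_iff₀ hr] at hnR
  rw [div_lt_iff₀ hr] at hRn
  have hdyadic : ∀ k < n + 1, (2 ^ k * r) ^ d * j (2 ^ k * r) ≤
      C * (2 ^ p + (2 * p) ^ p) * (r ^ d * j r) * (1 / 2) ^ k := by
    intro k hk
    have hkR : 2 ^ k * r ≤ R := le_trans
      (mul_le_mul_of_nonneg_right (pow_le_pow_right₀ one_le_two (Nat.lt_succ_iff.1 hk)) hr.le) hnR
    have hrk : r ≤ 2 ^ k * r := le_mul_of_one_le_left hr.le (one_le_pow₀ one_le_two)
    convert pow_mul_le_of_log_ratio_scaling hp hC hr hrk (hkR.trans_lt hR) hjr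
      (hscale r _ hr hrk hkR) using 1
    rw [div_mul_cancel_right₀ hr.ne', one_div, inv_pow]
    ring
  calc tailLam d j r ≤ _ := tailLam_le_sum_add_tailLam hj hr (n + 1)
    _ ≤ _ := add_le_add (sum_ofReal_mul_volume_ball_le hj₀ hr (by positivity) hdyadic)
      (tailLam_antitone hRn.le)

end Tail

theorem stmt4_general (d : ℕ) (j : ℝ → ℝ)
    (hnonneg : ∀ r : ℝ, 0 < r → 0 ≤ j r)
    (hmono : AntitoneOn j (Set.Ioi (0 : ℝ)))
    (hLK : (∫⁻ x : EuclideanSpace ℝ (Fin d),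
      ENNReal.ofReal (min 1 (‖x‖ ^ 2) * j ‖x‖)) < ⊤)
    (c₀ δ₀ : ℝ) (hc₀ : 0 < c₀) (hδ₀ : 0 < δ₀)
    (hlow : ∀ r : ℝ, 0 < r → r ≤ δ₀ → c₀ * r ^ (-(d : ℝ)) ≤ j r)
    (C R α : ℝ) (hC : 0 < C) (hR0 : 0 < R) (hR1 : R < (Real.exp 1)⁻¹) (hα : 0 < α)
    (hscale : ∀ s r : ℝ, 0 < s → s ≤ r → r ≤ R →
      r ^ (d + 2) * j r ≤
        C * (Real.log (1 / s) / Real.log (1 / r)) ^ (1 + α) * (s ^ (d + 2) * j s)) :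
    ∃ C' δ : ℝ, 0 < C' ∧ 0 < δ ∧ ∀ r : ℝ, 0 < r → r ≤ δ →
      tailLam d j r ≤ ENNReal.ofReal (C' * (r ^ d * j r)) := by
  set M := (2 : ℝ) ^ (1 + α) + (2 * (1 + α)) ^ (1 + α)
  set b := (volume (ball (0 : EuclideanSpace ℝ (Fin d)) 1)).toReal
  set t := (tailLam d j R).toReal
  have hb : 0 < b := ENNReal.toReal_pos (measure_ball_pos volume 0 one_pos).ne'
    measure_ball_lt_top.ne
  refine ⟨2 ^ (d + 1) * (C * M) * b + t / c₀, min δ₀ R, by positivity, lt_min hδ₀ hR0,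
    fun r hr hrδ => ?_⟩
  have hjr := hnonneg r hr
  have hc₀_le : c₀ ≤ r ^ d * j r := by
    have h := hlow r hr (hrδ.trans (min_le_left _ _))
    rw [rpow_neg hr.le, Real.rpow_natCast, ← div_eq_mul_inv, div_le_iff₀ (by positivity)] at h
    linarith
  have htail : tailLam d j R ≤ ENNReal.ofReal (t / c₀ * (r ^ d * j r)) := by
    rw [← ENNReal.ofReal_toReal (tailLam_ne_top hnonneg hLK hR0)]
    gcongr
    calc t = t / c₀ * c₀ := (div_mul_cancel₀ t hc₀.ne').symm
      _ ≤ t / c₀ * (r ^ d * j r) := by gcongr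
  calc tailLam d j r
      ≤ ENNReal.ofReal (2 ^ (d + 1) * (C * M * (r ^ d * j r)) * b) + tailLam d j R :=
        tailLam_le_ofReal_mul_add_tailLam hnonneg hmono hC.le (by linarith) hR1 hscale hr
          (hrδ.trans (min_le_right _ _))
    _ ≤ ENNReal.ofReal (2 ^ (d + 1) * (C * M * (r ^ d * j r)) * b) +
          ENNReal.ofReal (t / c₀ * (r ^ d * j r)) := by gcongr
    _ = ENNReal.ofReal ((2 ^ (d + 1) * (C * M) * b + t / c₀) * (r ^ d * j r)) := by
        rw [← ENNReal.ofReal_add (by positivity) (by positivity)]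
        ring_nf

theorem stmt4 (d : ℕ) (hd : 1 ≤ d) (j : ℝ → ℝ)
    (hnonneg : ∀ r : ℝ, 0 < r → 0 ≤ j r)
    (hmono : AntitoneOn j (Set.Ioi (0 : ℝ)))
    (hLK : (∫⁻ x : EuclideanSpace ℝ (Fin d),
      ENNReal.ofReal (min 1 (‖x‖ ^ 2) * j ‖x‖)) < ⊤)
    (c₀ δ₀ : ℝ) (hc₀ : 0 < c₀) (hδ₀ : 0 < δ₀)
    (hlow : ∀ r : ℝ, 0 < r → r ≤ δ₀ → c₀ * r ^ (-(d : ℝ)) ≤ j r)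
    (C R α : ℝ) (hC : 0 < C) (hR0 : 0 < R) (hR1 : R < (Real.exp 1)⁻¹) (hα : 0 < α)
    (hscale : ∀ s r : ℝ, 0 < s → s ≤ r → r ≤ R →
      r ^ (d + 2) * j r ≤
        C * (Real.log (1 / s) / Real.log (1 / r)) ^ (1 + α) * (s ^ (d + 2) * j s)) :
    ∃ C' δ : ℝ, 0 < C' ∧ 0 < δ ∧ ∀ r : ℝ, 0 < r → r ≤ δ →
      tailLam d j r ≤ ENNReal.ofReal (C' * (r ^ d * j r)) :=
  stmt4_general d j hnonneg hmono hLK c₀ δ₀ hc₀ hδ₀ hlow C R α hC hR0 hR1 hα hscale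
end

section
/- Let d ≥ 1 and let j : (0,∞) → [0,∞) be nonincreasing with ∫_{ℝ^d} min{1,|x|²} j(|x|) dx < ∞. Suppose there exist C > 0, R > e, α > 0 such that s^{d+2}·j(s) ≤ C·(log s / log r)^{1+α}·r^{d+2}·j(r) for all R ≤ r ≤ s. Then there exist C' > 0 and R' > 0 such that λ(r) ≤ C'·r^d·j(r) for all r ≥ R'. -/
/-!
Cut the complement of the ball `B(0, r)` into the dyadic annuli `2ᵏr ≤ |x| < 2ᵏ⁺¹r`. On the
`k`-th annulus `j ≤ j(2ᵏr)` by monotonicity, and its volume is at most that of a ball of radius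
`2ᵏ⁺¹r`. Taking `s = 2ᵏr` in the scaling hypothesis, and using `log (2ᵏr) / log r ≤ k + 1` for
`r ≥ 2`, the `k`-th contribution is at most a constant times `(k + 1)^⌈1 + α⌉ 4⁻ᵏ rᵈ j(r)`,
and this series in `k` converges.
-/

open MeasureTheory Metric ENNReal

theorem compl_ball_subset_iUnion_two_pow_annulus {X : Type*} [PseudoMetricSpace X] (c : X)
    {r : ℝ} (hr : 0 < r) :
    (ball c r)ᶜ ⊆ ⋃ k : ℕ, ball c (2 ^ (k + 1) * r) \ ball c (2 ^ k * r) := by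
  intro x hx
  rw [Set.mem_compl_iff, mem_ball, not_lt] at hx
  obtain ⟨k, hk, hk1⟩ := exists_nat_pow_near ((one_le_div hr).2 hx) one_lt_two
  refine Set.mem_iUnion.2 ⟨k, ?_, ?_⟩
  · rw [mem_ball, ← div_lt_iff₀ hr]
    exact hk1
  · rw [mem_ball, not_lt, ← le_div_iff₀ hr]
    exact hk

theorem setLIntegral_compl_ball_le_tsum {E : Type*} [SeminormedAddCommGroup E]
    [MeasurableSpace E] (μ : Measure E) {j : ℝ → ℝ} (hmono : AntitoneOn j (Set.Ioi 0))
    {r : ℝ} (hr : 0 < r) :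
    ∫⁻ x in (ball 0 r)ᶜ, ENNReal.ofReal (j ‖x‖) ∂μ ≤
      ∑' k : ℕ, ENNReal.ofReal (j (2 ^ k * r)) * μ (ball 0 (2 ^ (k + 1) * r)) := by
  refine (lintegral_mono_set (compl_ball_subset_iUnion_two_pow_annulus 0 hr)).trans
    ((lintegral_iUnion_le _ _).trans (ENNReal.tsum_le_tsum fun k => ?_))
  have hk : 0 < 2 ^ k * r := by positivity
  calc ∫⁻ x in ball 0 (2 ^ (k + 1) * r) \ ball 0 (2 ^ k * r), ENNReal.ofReal (j ‖x‖) ∂μ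
      ≤ ∫⁻ _ in ball 0 (2 ^ (k + 1) * r) \ ball 0 (2 ^ k * r),
          ENNReal.ofReal (j (2 ^ k * r)) ∂μ := by
        refine setLIntegral_mono measurable_const fun x hx => ENNReal.ofReal_le_ofReal ?_
        have hx : 2 ^ k * r ≤ ‖x‖ := by simpa using hx.2
        exact hmono hk (hk.trans_le hx) hx
    _ ≤ _ := by
        rw [setLIntegral_const]
        exact mul_le_mul_right (measure_mono Set.sdiff_subset) _

theorem setLIntegral_compl_ball_le_of_le {E : Type*} [NormedAddCommGroup E] [NormedSpace ℝ E]
    [FiniteDimensional ℝ E] [MeasurableSpace E] [BorelSpace E] (μ : Measure E)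
    [μ.IsAddHaarMeasure] {j : ℝ → ℝ} (hmono : AntitoneOn j (Set.Ioi 0)) {r : ℝ} (hr : 0 < r)
    {g : ℕ → ℝ} (hg : Summable g) (hg0 : ∀ k, 0 ≤ g k)
    (hjg : ∀ k, j (2 ^ k * r) * (2 ^ (k + 1) * r) ^ Module.finrank ℝ E ≤ g k) :
    ∫⁻ x in (ball 0 r)ᶜ, ENNReal.ofReal (j ‖x‖) ∂μ ≤ ENNReal.ofReal (∑' k, g k) * μ (ball 0 1) :=
  calc ∫⁻ x in (ball 0 r)ᶜ, ENNReal.ofReal (j ‖x‖) ∂μ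
      ≤ ∑' k : ℕ, ENNReal.ofReal (j (2 ^ k * r)) * μ (ball 0 (2 ^ (k + 1) * r)) :=
        setLIntegral_compl_ball_le_tsum μ hmono hr
    _ = ∑' k : ℕ, ENNReal.ofReal (j (2 ^ k * r) * (2 ^ (k + 1) * r) ^ Module.finrank ℝ E) *
          μ (ball 0 1) := by
        refine tsum_congr fun k => ?_
        rw [Measure.addHaar_ball_of_pos μ _ (by positivity), ENNReal.ofReal_mul' (by positivity),
          mul_assoc]
    _ ≤ ∑' k, ENNReal.ofReal (g k) * μ (ball 0 1) :=
        ENNReal.tsum_le_tsum fun k => mul_le_mul_left (ENNReal.ofReal_le_ofReal (hjg k)) _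
    _ = ENNReal.ofReal (∑' k, g k) * μ (ball 0 1) := by
        rw [ENNReal.tsum_mul_right, ENNReal.ofReal_tsum_of_nonneg hg0 hg]

theorem log_two_pow_mul_div_log_le {r : ℝ} (hr : 2 ≤ r) (k : ℕ) :
    Real.log (2 ^ k * r) / Real.log r ≤ k + 1 := by
  have hlog2 : Real.log 2 ≤ Real.log r := Real.log_le_log two_pos hr
  have hlogr : 0 < Real.log r := Real.log_pos (by linarith)
  rw [div_le_iff₀ hlogr, Real.log_mul (by positivity) (by linarith), Real.log_pow]
  nlinarith [mul_le_mul_of_nonneg_left hlog2 k.cast_nonneg]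

theorem two_pow_mul_pow_mul_le_of_scaling {d : ℕ} {j : ℝ → ℝ} {C p r : ℝ} (hC : 0 ≤ C)
    (hp : 0 ≤ p) (hr : 2 ≤ r) (hjr : 0 ≤ j r) (k : ℕ)
    (hscale : (2 ^ k * r) ^ (d + 2) * j (2 ^ k * r) ≤
      C * (Real.log (2 ^ k * r) / Real.log r) ^ p * (r ^ (d + 2) * j r)) :
    j (2 ^ k * r) * (2 ^ (k + 1) * r) ^ d ≤
      C * 2 ^ (d + 2) * (r ^ d * j r) * (((k + 1 : ℕ) : ℝ) ^ ⌈p⌉₊ * (1 / 4) ^ (k + 1)) := by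
  have hratio : (Real.log (2 ^ k * r) / Real.log r) ^ p ≤ ((k + 1 : ℕ) : ℝ) ^ ⌈p⌉₊ := by
    have hk : (1 : ℝ) ≤ k + 1 := by linarith [k.cast_nonneg (α := ℝ)]
    calc (Real.log (2 ^ k * r) / Real.log r) ^ p
        ≤ ((k : ℝ) + 1) ^ p := by
          refine Real.rpow_le_rpow (div_nonneg (Real.log_nonneg ?_) (Real.log_nonneg ?_))
            (log_two_pow_mul_div_log_le hr k) hp
          · nlinarith [one_le_pow₀ (M₀ := ℝ) (n := k) one_le_two]
          · linarith
      _ ≤ ((k : ℝ) + 1) ^ (⌈p⌉₊ : ℝ) := Real.rpow_le_rpow_of_exponent_le hk (Nat.le_ceil p)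
      _ = ((k + 1 : ℕ) : ℝ) ^ ⌈p⌉₊ := by push_cast; exact Real.rpow_natCast _ _
  have h : (2 ^ k * r) ^ (d + 2) * j (2 ^ k * r) ≤
      C * ((k + 1 : ℕ) : ℝ) ^ ⌈p⌉₊ * (r ^ (d + 2) * j r) :=
    hscale.trans (by gcongr)
  have hr0 : 0 < r := by linarith
  have hquarter : (1 / 4 : ℝ) ^ (k + 1) = 1 / (4 * ((2 : ℝ) ^ k) ^ 2) := by
    rw [one_div_pow, ← pow_mul, mul_comm k 2, pow_mul]; norm_num [pow_succ, mul_comm]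
  rw [← mul_le_mul_iff_right₀ (pow_pos (by positivity : (0 : ℝ) < 2 ^ k * r) (d + 2))]
  calc (2 ^ k * r) ^ (d + 2) * (j (2 ^ k * r) * (2 ^ (k + 1) * r) ^ d)
      = ((2 ^ k * r) ^ (d + 2) * j (2 ^ k * r)) * (2 ^ (k + 1) * r) ^ d := by ring
    _ ≤ C * ((k + 1 : ℕ) : ℝ) ^ ⌈p⌉₊ * (r ^ (d + 2) * j r) * (2 ^ (k + 1) * r) ^ d :=
        mul_le_mul_of_nonneg_right h (by positivity)
    _ = _ := by rw [hquarter]; field_simp; ring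

theorem summable_natCast_succ_pow_mul_geometric_succ {R : Type*} [NormedRing R]
    [HasSummableGeomSeries R] (n : ℕ) {q : R} (hq : ‖q‖ < 1) :
    Summable fun k : ℕ => ((k + 1 : ℕ) : R) ^ n * q ^ (k + 1) :=
  (summable_nat_add_iff (f := fun m : ℕ => (m : R) ^ n * q ^ m) 1).mpr
    (summable_pow_mul_geometric_of_norm_lt_one n hq)

theorem stmt5_general (d : ℕ) (j : ℝ → ℝ)
    (hnonneg : ∀ r : ℝ, 0 < r → 0 ≤ j r)
    (hmono : AntitoneOn j (Set.Ioi (0 : ℝ)))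
    (C R α : ℝ) (hC : 0 < C) (hR : Real.exp 1 < R) (hα : 0 < α)
    (hscale : ∀ r s : ℝ, R ≤ r → r ≤ s →
      s ^ (d + 2) * j s ≤
        C * (Real.log s / Real.log r) ^ (1 + α) * (r ^ (d + 2) * j r)) :
    ∃ C' R' : ℝ, 0 < C' ∧ 0 < R' ∧ ∀ r : ℝ, R' ≤ r →
      tailLam d j r ≤ ENNReal.ofReal (C' * (r ^ d * j r)) := by
  have hR2 : 2 ≤ R := by linarith [Real.exp_one_gt_d9]
  set g : ℕ → ℝ := fun k => ((k + 1 : ℕ) : ℝ) ^ ⌈1 + α⌉₊ * (1 / 4) ^ (k + 1)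
  have hg : Summable g := summable_natCast_succ_pow_mul_geometric_succ _ (by norm_num)
  set κ := volume (ball (0 : EuclideanSpace ℝ (Fin d)) 1)
  have hκ : κ ≠ ⊤ := measure_ball_lt_top.ne
  have hg0 (k : ℕ) : 0 ≤ g k := by positivity
  have hgS : 0 < ∑' k, g k := hg.tsum_pos hg0 0 (by positivity)
  have hκS : 0 < κ.toReal := ENNReal.toReal_pos (measure_ball_pos _ _ one_pos).ne' hκ
  refine ⟨C * 2 ^ (d + 2) * (∑' k, g k) * κ.toReal, R, by positivity, by linarith,
    fun r hr => ?_⟩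
  have hr0 : 0 < r := by linarith
  have hjr : 0 ≤ j r := hnonneg r hr0
  have hK : 0 ≤ C * 2 ^ (d + 2) * (r ^ d * j r) := by positivity
  have hjg (k : ℕ) : j (2 ^ k * r) * (2 ^ (k + 1) * r) ^ Module.finrank ℝ
      (EuclideanSpace ℝ (Fin d)) ≤ C * 2 ^ (d + 2) * (r ^ d * j r) * g k := by
    rw [finrank_euclideanSpace_fin]
    exact two_pow_mul_pow_mul_le_of_scaling hC.le (by linarith) (hR2.trans hr) hjr k
      (hscale r _ hr (le_mul_of_one_le_left (by linarith) (one_le_pow₀ one_le_two)))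
  calc tailLam d j r
      ≤ ENNReal.ofReal (∑' k, C * 2 ^ (d + 2) * (r ^ d * j r) * g k) * κ :=
        setLIntegral_compl_ball_le_of_le volume hmono hr0 (hg.mul_left _)
          (fun k => mul_nonneg hK (hg0 k)) hjg
    _ = ENNReal.ofReal (C * 2 ^ (d + 2) * (∑' k, g k) * κ.toReal * (r ^ d * j r)) := by
        conv_lhs => rw [tsum_mul_left, ← ENNReal.ofReal_toReal hκ]
        rw [← ENNReal.ofReal_mul (mul_nonneg hK hgS.le)]
        ring_nf

theorem stmt5 (d : ℕ) (hd : 1 ≤ d) (j : ℝ → ℝ)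
    (hnonneg : ∀ r : ℝ, 0 < r → 0 ≤ j r)
    (hmono : AntitoneOn j (Set.Ioi (0 : ℝ)))
    (hLK : (∫⁻ x : EuclideanSpace ℝ (Fin d),
      ENNReal.ofReal (min 1 (‖x‖ ^ 2) * j ‖x‖)) < ⊤)
    (C R α : ℝ) (hC : 0 < C) (hR : Real.exp 1 < R) (hα : 0 < α)
    (hscale : ∀ r s : ℝ, R ≤ r → r ≤ s →
      s ^ (d + 2) * j s ≤
        C * (Real.log s / Real.log r) ^ (1 + α) * (r ^ (d + 2) * j r)) :
    ∃ C' R' : ℝ, 0 < C' ∧ 0 < R' ∧ ∀ r : ℝ, R' ≤ r →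
      tailLam d j r ≤ ENNReal.ofReal (C' * (r ^ d * j r)) :=
  stmt5_general d j hnonneg hmono C R α hC hR hα hscale
end

section
/- Let μ be a measure on (0,∞) and suppose there exist c > 0 and δ ∈ (0,1) such that μ(A) ≥ c·∫_A t^{−2}·(log(1/t))^{−2} dt for every measurable A ⊆ (0, δ]. Define φ(λ) := ∫_{(0,∞)} (1 − e^{−λt}) dμ(t) (with values in [0,∞]). Then there exist constants C > 0 and Λ > 1 such that φ(λ) ≥ C·λ/log λ for all λ ≥ Λ. -/
/-!
On `(l⁻², l⁻¹]` one has `1 - e^{-lt} ≥ lt/2`, so the lower bound on `μ` gives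
`φ(l) ≥ c · (l/2) · ∫ dt / (t log² t)` over that interval. Since `-1/log t` is a primitive of
`1/(t log² t)`, the integral equals `1/log l - 1/(2 log l) = 1/(2 log l)`.
-/

open MeasureTheory ENNReal

theorem Real.div_two_le_one_sub_exp_neg {x : ℝ} (hx0 : 0 ≤ x) (hx1 : x ≤ 1) :
    x / 2 ≤ 1 - Real.exp (-x) := by
  have hinv : Real.exp (-x) * Real.exp x = 1 := by
    rw [← Real.exp_add, neg_add_cancel, Real.exp_zero]
  nlinarith [Real.add_one_le_exp x, Real.exp_pos (-x)]

theorem Real.hasDerivAt_neg_inv_log {t : ℝ} (ht : t ≠ 0) (hlog : Real.log t ≠ 0) :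
    HasDerivAt (fun t => -(Real.log t)⁻¹) ((t * Real.log t ^ 2)⁻¹) t :=
  ((Real.hasDerivAt_log ht).inv hlog).neg.congr_deriv <| by
    rw [neg_div, neg_neg, div_eq_mul_inv, mul_inv]

theorem lintegral_Ioc_inv_mul_log_sq {a b : ℝ} (ha : 0 < a) (hab : a ≤ b) (hb : b < 1) :
    ∫⁻ t in Set.Ioc a b, ENNReal.ofReal ((t * Real.log t ^ 2)⁻¹) =
      ENNReal.ofReal ((Real.log a)⁻¹ - (Real.log b)⁻¹) := by
  have hlog : ∀ t ∈ Set.Icc a b, t ≠ 0 ∧ Real.log t ≠ 0 := fun t ht =>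
    ⟨(ha.trans_le ht.1).ne', (Real.log_neg (ha.trans_le ht.1) (ht.2.trans_lt hb)).ne⟩
  have hderiv : ∀ t ∈ Set.Ioo a b,
      HasDerivAt (fun t => -(Real.log t)⁻¹) ((t * Real.log t ^ 2)⁻¹) t := fun t ht =>
    Real.hasDerivAt_neg_inv_log (hlog t (Set.Ioo_subset_Icc_self ht)).1
      (hlog t (Set.Ioo_subset_Icc_self ht)).2
  have hcont : ContinuousOn (fun t => -(Real.log t)⁻¹) (Set.Icc a b) :=
    ((Real.continuousOn_log.mono fun t ht => (hlog t ht).1).inv₀ fun t ht => (hlog t ht).2).neg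
  have hint := intervalIntegral.integrableOn_deriv_of_nonneg hcont hderiv
    fun t ht => by have := ha.trans ht.1; positivity
  rw [← ofReal_integral_eq_lintegral_ofReal hint, ← intervalIntegral.integral_of_le hab,
    intervalIntegral.integral_eq_sub_of_hasDerivAt_of_le hab hcont hderiv
      ((intervalIntegrable_iff_integrableOn_Ioc_of_le hab).2 hint)]
  · congr 1; ring
  · exact ae_restrict_of_forall_mem measurableSet_Ioc fun t ht => by
      have := ha.trans ht.1; positivity

theorem half_mul_inv_mul_log_sq_le {l t : ℝ} (hl : 0 ≤ l) (ht : 0 < t) (hlt : l * t ≤ 1) :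
    l / 2 * (t * Real.log t ^ 2)⁻¹ ≤
      (t ^ 2 * Real.log (1 / t) ^ 2)⁻¹ * (1 - Real.exp (-(l * t))) := by
  have hrw : l / 2 * (t * Real.log t ^ 2)⁻¹ =
      (t ^ 2 * Real.log (1 / t) ^ 2)⁻¹ * (l * t / 2) := by
    rw [one_div, Real.log_inv, neg_sq]
    field_simp
  rw [hrw]
  exact mul_le_mul_of_nonneg_left (Real.div_two_le_one_sub_exp_neg (by positivity) hlt)
    (by positivity)

theorem const_mul_setLIntegral_mul_le {α : Type*} [MeasurableSpace α] {ν μ : Measure α}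
    {g f : α → ℝ≥0∞} (hg : Measurable g) (hf : Measurable f) {s : Set α} (hs : MeasurableSet s)
    {k : ℝ≥0∞} (h : ∀ A, MeasurableSet A → A ⊆ s → k * ∫⁻ t in A, g t ∂ν ≤ μ A) :
    k * ∫⁻ t in s, g t * f t ∂ν ≤ ∫⁻ t in s, f t ∂μ := by
  have hle : (k • ν.withDensity g).restrict s ≤ μ.restrict s := by
    refine Measure.le_iff.2 fun A hA => ?_
    rw [Measure.restrict_apply hA, Measure.restrict_apply hA, Measure.smul_apply, smul_eq_mul,
      withDensity_apply _ (hA.inter hs)]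
    exact h _ (hA.inter hs) Set.inter_subset_right
  calc k * ∫⁻ t in s, g t * f t ∂ν
      = ∫⁻ t in s, f t ∂(k • ν.withDensity g) := by
        rw [Measure.restrict_smul, lintegral_smul_measure, restrict_withDensity hs,
          lintegral_withDensity_eq_lintegral_mul _ hg hf]
        rfl
    _ ≤ ∫⁻ t in s, f t ∂μ := lintegral_mono' hle le_rfl

theorem ofReal_div_four_mul_log_le_setLIntegral {l : ℝ} (hl : 1 < l) :
    ENNReal.ofReal (l / (4 * Real.log l)) ≤
      ∫⁻ t in Set.Ioc (l ^ 2)⁻¹ l⁻¹, ENNReal.ofReal ((t ^ 2 * Real.log (1 / t) ^ 2)⁻¹) *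
        ENNReal.ofReal (1 - Real.exp (-(l * t))) := by
  have hl0 : 0 < l := one_pos.trans hl
  have hlog : 0 < Real.log l := Real.log_pos hl
  have hint : ∫⁻ t in Set.Ioc (l ^ 2)⁻¹ l⁻¹, ENNReal.ofReal ((t * Real.log t ^ 2)⁻¹) =
      ENNReal.ofReal (2 * Real.log l)⁻¹ := by
    rw [lintegral_Ioc_inv_mul_log_sq (by positivity) (inv_anti₀ hl0 (by nlinarith))
      (inv_lt_one_of_one_lt₀ hl), Real.log_inv, Real.log_inv, Real.log_pow]
    congr 1
    field_simp
    ring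
  calc ENNReal.ofReal (l / (4 * Real.log l))
      = ∫⁻ t in Set.Ioc (l ^ 2)⁻¹ l⁻¹,
          ENNReal.ofReal (l / 2) * ENNReal.ofReal ((t * Real.log t ^ 2)⁻¹) := by
        rw [lintegral_const_mul' _ _ ofReal_ne_top, hint, ← ofReal_mul (by positivity)]
        congr 1
        field_simp
        ring
    _ ≤ _ := by
        refine setLIntegral_mono' measurableSet_Ioc fun t ht => ?_
        have ht0 : 0 < t := (by positivity : (0 : ℝ) < (l ^ 2)⁻¹).trans ht.1
        have hlt : l * t ≤ 1 := by
          simpa [hl0.ne'] using mul_le_mul_of_nonneg_left ht.2 hl0.le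
        rw [← ofReal_mul (by positivity), ← ofReal_mul (by positivity)]
        exact ofReal_le_ofReal (half_mul_inv_mul_log_sq_le hl0.le ht0 hlt)

theorem stmt12_general (μ : Measure ℝ) (c δ : ℝ) (hc : 0 < c) (hδ0 : 0 < δ)
    (hlow : ∀ A : Set ℝ, MeasurableSet A → A ⊆ Set.Ioc 0 δ →
      ENNReal.ofReal c *
          (∫⁻ t in A, ENNReal.ofReal ((t ^ 2 * Real.log (1 / t) ^ 2)⁻¹)) ≤ μ A) :
    ∃ C Λ : ℝ, 0 < C ∧ 1 < Λ ∧ ∀ l : ℝ, Λ ≤ l →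
      ENNReal.ofReal (C * l / Real.log l) ≤
        ∫⁻ t in Set.Ioi (0 : ℝ), ENNReal.ofReal (1 - Real.exp (-(l * t))) ∂μ := by
  refine ⟨c / 4, max 2 δ⁻¹, by positivity, one_lt_two.trans_le (le_max_left _ _), fun l hl => ?_⟩
  have hl1 : 1 < l := one_lt_two.trans_le ((le_max_left _ _).trans hl)
  have hl0 : 0 < l := one_pos.trans hl1
  have hδl : l⁻¹ ≤ δ := (inv_le_comm₀ hl0 hδ0).2 ((le_max_right _ _).trans hl)
  have hS : Set.Ioc (l ^ 2)⁻¹ l⁻¹ ⊆ Set.Ioi 0 := fun t ht =>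
    (by positivity : (0 : ℝ) < (l ^ 2)⁻¹).trans ht.1
  calc ENNReal.ofReal (c / 4 * l / Real.log l)
      = ENNReal.ofReal c * ENNReal.ofReal (l / (4 * Real.log l)) := by
        rw [← ofReal_mul hc.le]
        congr 1
        ring
    _ ≤ ENNReal.ofReal c * ∫⁻ t in Set.Ioc (l ^ 2)⁻¹ l⁻¹,
          ENNReal.ofReal ((t ^ 2 * Real.log (1 / t) ^ 2)⁻¹) *
            ENNReal.ofReal (1 - Real.exp (-(l * t))) := by
        gcongr
        exact ofReal_div_four_mul_log_le_setLIntegral hl1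
    _ ≤ ∫⁻ t in Set.Ioc (l ^ 2)⁻¹ l⁻¹, ENNReal.ofReal (1 - Real.exp (-(l * t))) ∂μ :=
        const_mul_setLIntegral_mul_le (by fun_prop) (by fun_prop) measurableSet_Ioc
          fun A hA hAS => hlow A hA fun t ht => ⟨hS (hAS ht), (hAS ht).2.trans hδl⟩
    _ ≤ _ := lintegral_mono_set hS

theorem stmt12 (μ : Measure ℝ) (c δ : ℝ) (hc : 0 < c) (hδ0 : 0 < δ) (hδ1 : δ < 1)
    (hlow : ∀ A : Set ℝ, MeasurableSet A → A ⊆ Set.Ioc 0 δ →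
      ENNReal.ofReal c *
          (∫⁻ t in A, ENNReal.ofReal ((t ^ 2 * Real.log (1 / t) ^ 2)⁻¹)) ≤ μ A) :
    ∃ C Λ : ℝ, 0 < C ∧ 1 < Λ ∧ ∀ l : ℝ, Λ ≤ l →
      ENNReal.ofReal (C * l / Real.log l) ≤
        ∫⁻ t in Set.Ioi (0 : ℝ), ENNReal.ofReal (1 - Real.exp (-(l * t))) ∂μ :=
  stmt12_general μ c δ hc hδ0 hlow
end

section
/- There is no function φ : (0,∞) → (0,∞) that is differentiable with φ'(λ) ≥ 0 for all λ > 0 and simultaneously satisfies: (i) there exist σ > 0, λ₀ > 0 and δ ∈ (0,1] such that φ'(λx) ≤ σ·x^{−δ}·φ'(λ) for all x ≥ 1 and λ ≥ λ₀; and (ii) there exist c > 0 and Λ > e such that φ(λ) ≥ c·λ/log λ for all λ ≥ Λ. -/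
/-!
Applying the scaling condition at the base point `λ₀` gives the decay `φ'(λ) ≲ λ^(-δ)`, hence
`φ'(λ) ≲ λ^(-ε)` with `ε = δ/2 < 1`, which avoids the logarithmic case `δ = 1`. Integrating,
`φ(λ) ≤ C + B λ^(1-ε)`, and since `log λ = o(λ^ε)` this is incompatible with
`φ(λ) ≥ c λ / log λ`.
-/

open Filter Real Asymptotics

theorem le_mul_rpow_neg_of_scaling {g : ℝ → ℝ} {σ l₀ δ : ℝ} (hl₀ : 0 < l₀)
    (hg : ∀ x l : ℝ, 1 ≤ x → l₀ ≤ l → g (l * x) ≤ σ * x ^ (-δ) * g l) (l : ℝ) (hl : l₀ ≤ l) :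
    g l ≤ σ * l₀ ^ δ * g l₀ * l ^ (-δ) := by
  have h := hg (l / l₀) l₀ ((one_le_div hl₀).2 hl) le_rfl
  rw [mul_div_cancel₀ l hl₀.ne', div_rpow (hl₀.le.trans hl) hl₀.le, rpow_neg hl₀.le,
    div_inv_eq_mul] at h
  exact h.trans_eq (by ring)

theorem sub_le_of_deriv_le_rpow {f f' : ℝ → ℝ} {L A ε : ℝ} (hL : 0 < L) (hε : ε ≠ 1)
    (hf : ∀ t, L ≤ t → HasDerivAt f (f' t) t) (hf' : ∀ t, L ≤ t → f' t ≤ A * t ^ (-ε))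
    (t : ℝ) (ht : L ≤ t) :
    f t - f L ≤ A / (1 - ε) * (t ^ (1 - ε) - L ^ (1 - ε)) := by
  have hε' : 1 - ε ≠ 0 := sub_ne_zero.2 hε.symm
  have hB : ∀ s, L ≤ s → HasDerivAt (fun s => f L + A / (1 - ε) * (s ^ (1 - ε) - L ^ (1 - ε)))
      (A * s ^ (-ε)) s := fun s hs =>
    (((hasDerivAt_rpow_const (p := 1 - ε) (Or.inl (hL.trans_le hs).ne')).sub_const
      (L ^ (1 - ε))).const_mul (A / (1 - ε)) |>.const_add (f L)).congr_deriv <| by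
      rw [sub_sub_cancel_left]
      field_simp
  have := image_le_of_deriv_right_le_deriv_boundary (a := L) (b := t)
    (fun s hs => (hf s hs.1).continuousAt.continuousWithinAt)
    (fun s hs => (hf s hs.1).hasDerivWithinAt) (by simp)
    (fun s hs => (hB s hs.1).continuousAt.continuousWithinAt)
    (fun s hs => (hB s hs.1).hasDerivWithinAt) (fun s hs => hf' s hs.1) ⟨ht, le_rfl⟩
  linarith

theorem log_mul_add_rpow_isLittleO_id {ε : ℝ} (hε : 0 < ε) (C B : ℝ) :
    (fun t => log t * (C + B * t ^ (1 - ε))) =o[atTop] id := by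
  have hconst : (fun t => log t * C) =o[atTop] id := by
    simpa only [mul_one] using
      isLittleO_log_id_atTop.mul_isBigO (isBigO_const_const C one_ne_zero atTop)
  have hpow : (fun t => log t * (B * t ^ (1 - ε))) =o[atTop] id := by
    refine ((isLittleO_log_rpow_atTop hε).mul_isBigO
      (isBigO_refl (fun t : ℝ => B * t ^ (1 - ε)) atTop)).trans_isBigO ?_
    refine (isBigO_const_mul_self B id atTop).congr' ?_ EventuallyEq.rfl
    filter_upwards [eventually_gt_atTop 0] with t ht
    rw [mul_left_comm, ← rpow_add ht, add_sub_cancel, rpow_one, id]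
  simpa only [mul_add] using hconst.add hpow

theorem not_eventually_div_log_le_add_rpow {c ε C B : ℝ} (hc : 0 < c) (hε : 0 < ε) :
    ¬ ∀ᶠ t in atTop, c * t / log t ≤ C + B * t ^ (1 - ε) := by
  intro h
  obtain ⟨t, hle, hsmall, ht⟩ := (h.and <| ((log_mul_add_rpow_isLittleO_id hε C B).bound
    (half_pos hc)).and (eventually_gt_atTop (exp 1))).exists
  have ht₀ : 0 < t := (exp_pos 1).trans ht
  have hlog : 0 < log t := (log_pos_iff ht₀.le).2 ((one_lt_exp_iff.2 one_pos).trans ht)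
  rw [div_le_iff₀ hlog] at hle
  rw [Real.norm_eq_abs, id, Real.norm_of_nonneg ht₀.le, mul_comm] at hsmall
  nlinarith [le_abs_self ((C + B * t ^ (1 - ε)) * log t)]

theorem stmt13 :
    ¬ ∃ (φ φ' : ℝ → ℝ),
      (∀ l : ℝ, 0 < l → 0 < φ l) ∧
      (∀ l : ℝ, 0 < l → HasDerivAt φ (φ' l) l) ∧
      (∀ l : ℝ, 0 < l → 0 ≤ φ' l) ∧
      (∃ σ lam₀ δ : ℝ, 0 < σ ∧ 0 < lam₀ ∧ 0 < δ ∧ δ ≤ 1 ∧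
        ∀ x l : ℝ, 1 ≤ x → lam₀ ≤ l → φ' (l * x) ≤ σ * x ^ (-δ) * φ' l) ∧
      (∃ c Λ : ℝ, 0 < c ∧ Real.exp 1 < Λ ∧
        ∀ l : ℝ, Λ ≤ l → c * l / Real.log l ≤ φ l) := by
  rintro ⟨φ, φ', -, hφ, hφ'_nonneg, ⟨σ, l₀, δ, hσ, hl₀, hδ, hδ₁, hscale⟩, c, Λ, hc, -, hgrow⟩
  set L := max l₀ 1
  set A := σ * l₀ ^ δ * φ' l₀
  have hA : 0 ≤ A := by have := hφ'_nonneg l₀ hl₀; positivity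
  have hdecay : ∀ l, L ≤ l → φ' l ≤ A * l ^ (-(δ / 2)) := fun l hl =>
    (le_mul_rpow_neg_of_scaling hl₀ hscale l ((le_max_left _ _).trans hl)).trans <|
      mul_le_mul_of_nonneg_left
        (rpow_le_rpow_of_exponent_le ((le_max_right _ _).trans hl) (by linarith)) hA
  have hupper := sub_le_of_deriv_le_rpow (lt_max_of_lt_right one_pos) (by linarith)
    (fun t ht => hφ t ((lt_max_of_lt_right one_pos).trans_le ht)) hdecay
  refine not_eventually_div_log_le_add_rpow (C := φ L - A / (1 - δ / 2) * L ^ (1 - δ / 2))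
    (B := A / (1 - δ / 2)) hc (half_pos hδ) ?_
  filter_upwards [eventually_ge_atTop L, eventually_ge_atTop Λ] with t htL htΛ
  linarith [hgrow t htΛ, hupper t htL]
end

section
/- Fix d ≥ 1. Let μ be a measure on (0,∞) and suppose there exist δ ∈ (0,1) and 0 < c₁ ≤ c₂ such that c₁·∫_A t^{−2}·(log(e + 1/t))^{−2} dt ≤ μ(A) ≤ c₂·∫_A t^{−2}·(log(e + 1/t))^{−2} dt for every measurable A ⊆ (0, δ], and such that μ((δ, ∞)) < ∞. Define j(r) := ∫_{(0,∞)} (4πt)^{−d/2}·exp(−r²/(4t)) dμ(t) for r > 0. Then there exist constants 0 < C₁ ≤ C₂ and r₀ ∈ (0,1) such that C₁·r^{−d−2}·(log(1/r))^{−2} ≤ j(r) ≤ C₂·r^{−d−2}·(log(1/r))^{−2} for all r ∈ (0, r₀]. -/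
/-!
For the lower bound only the times `t ∈ (r², 2r²]` are used: there the heat kernel is of
order `r⁻ᵈ`, the density of `μ` of order `r⁻⁴ log(1/r)⁻²`, and the interval has length `r²`.

For the upper bound, the part of `μ` beyond `δ` contributes `O(1)`. On `(0, r]` the logarithmic
factor of the density is at least `log(1/r)`, and `∫₀^∞ p_t(r) t⁻² dt = O(r^(-d-2))`; near
`t = 0` this uses `e^(-x) ≤ k!/x^k` with `k = d + 2`. On `(r, δ]` the density is at most `t⁻²`,
which gives `O(r^(-d/2-1))`, and this is `O(r^(-d-2) log(1/r)⁻²)` since `log(1/r) = O(r^(-ε))`.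
-/

open MeasureTheory ENNReal Set

noncomputable def heatKernel (d : ℕ) (t r : ℝ) : ℝ :=
  (4 * Real.pi * t) ^ (-(d : ℝ) / 2) * Real.exp (-r ^ 2 / (4 * t))

noncomputable def logWeight (t : ℝ) : ℝ :=
  (t ^ 2 * Real.log (Real.exp 1 + 1 / t) ^ 2)⁻¹

lemma Real.exp_neg_le_factorial_div_pow (k : ℕ) {x : ℝ} (hx : 0 < x) :
    Real.exp (-x) ≤ k.factorial / x ^ k := by
  rw [Real.exp_neg, ← inv_div]
  exact inv_anti₀ (by positivity) (Real.pow_div_factorial_le_exp _ hx.le k)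

lemma Real.rpow_mul_log_inv_sq_le {r a : ℝ} (hr0 : 0 < r) (hr1 : r ≤ 1) (ha : 0 < a) :
    r ^ a * Real.log (1 / r) ^ 2 ≤ 4 / a ^ 2 := by
  have hlog : Real.log (1 / r) ≤ (1 / r) ^ (a / 2) / (a / 2) :=
    Real.log_le_rpow_div (by positivity) (by positivity)
  have hlog0 : 0 ≤ Real.log (1 / r) := Real.log_nonneg (by rw [le_div_iff₀ hr0]; linarith)
  have hpow : ((1 / r) ^ (a / 2)) ^ 2 = (r ^ a)⁻¹ := by
    rw [← Real.rpow_natCast, ← Real.rpow_mul (by positivity), one_div, Real.inv_rpow hr0.le]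
    norm_num
  calc r ^ a * Real.log (1 / r) ^ 2 ≤ r ^ a * ((1 / r) ^ (a / 2) / (a / 2)) ^ 2 := by gcongr
    _ = 4 / a ^ 2 := by
      rw [div_pow, hpow]
      have : 0 < r ^ a := Real.rpow_pos_of_pos hr0 a
      field_simp
      ring

section HeatKernel

variable (d : ℕ) {t r : ℝ}

lemma heatKernel_nonneg (ht : 0 ≤ t) : 0 ≤ heatKernel d t r := by
  unfold heatKernel; positivity

lemma heatKernel_le (ht : 0 < t) : heatKernel d t r ≤ (4 * Real.pi * t) ^ (-(d : ℝ) / 2) := by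
  refine mul_le_of_le_one_right (by positivity) (Real.exp_le_one_iff.2 ?_)
  rw [neg_div]
  exact neg_nonpos.2 (by positivity)

lemma le_heatKernel {s : ℝ} (ht : 0 < t) (hrt : r ^ 2 ≤ t) (hts : t ≤ s) :
    (4 * Real.pi * s) ^ (-(d : ℝ) / 2) * Real.exp (-(1 / 4)) ≤ heatKernel d t r := by
  have hd : -(d : ℝ) / 2 ≤ 0 := by have : (0 : ℝ) ≤ d := d.cast_nonneg; linarith
  have hexp : -(1 / 4 : ℝ) ≤ -r ^ 2 / (4 * t) := by
    rw [neg_div, neg_le_neg_iff, div_le_iff₀ (by positivity)]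
    linarith
  exact mul_le_mul (Real.rpow_le_rpow_of_nonpos (by positivity) (by gcongr) hd)
    (Real.exp_le_exp.2 hexp) (Real.exp_pos _).le (by positivity)

lemma heatKernel_div_sq_le (ht : 0 < t) :
    heatKernel d t r / t ^ 2 ≤ (4 * Real.pi) ^ (-(d : ℝ) / 2) * t ^ (-((d : ℝ) / 2 + 2)) := by
  have hsplit : t ^ (-((d : ℝ) / 2 + 2)) = t ^ (-(d : ℝ) / 2) / t ^ 2 := by
    rw [← Real.rpow_natCast, ← Real.rpow_sub ht]
    norm_num
    ring_nf
  rw [hsplit, ← mul_div_assoc, ← Real.mul_rpow (by positivity) ht.le]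
  gcongr
  exact heatKernel_le d ht

lemma heatKernel_div_sq_le_of_le_sq (hr : 0 < r) (ht : 0 < t) (htr : t ≤ r ^ 2) :
    heatKernel d t r / t ^ 2 ≤
      (4 * Real.pi) ^ (-(d : ℝ) / 2) * (d + 2).factorial * 4 ^ (d + 2) / r ^ (d + 4) := by
  have hexp : Real.exp (-r ^ 2 / (4 * t)) ≤
      (d + 2).factorial * (4 * t) ^ (d + 2) / (r ^ 2) ^ (d + 2) := by
    have := Real.exp_neg_le_factorial_div_pow (d + 2) (show 0 < r ^ 2 / (4 * t) by positivity)
    rwa [← neg_div, div_pow, div_div_eq_mul_div] at this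
  have hhalf : t ^ (-(d : ℝ) / 2) * t ^ d = t ^ ((d : ℝ) / 2) := by
    rw [← Real.rpow_natCast, ← Real.rpow_add ht]
    ring_nf
  have hroot : t ^ ((d : ℝ) / 2) ≤ r ^ d := by
    calc t ^ ((d : ℝ) / 2) ≤ (r ^ 2) ^ ((d : ℝ) / 2) := by gcongr
      _ = r ^ d := by
        rw [← Real.rpow_natCast r 2, ← Real.rpow_mul hr.le, ← Real.rpow_natCast]
        ring_nf
  unfold heatKernel
  rw [Real.mul_rpow (by positivity) ht.le]
  calc (4 * Real.pi) ^ (-(d : ℝ) / 2) * t ^ (-(d : ℝ) / 2) * Real.exp (-r ^ 2 / (4 * t)) / t ^ 2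
      ≤ (4 * Real.pi) ^ (-(d : ℝ) / 2) * t ^ (-(d : ℝ) / 2) *
          ((d + 2).factorial * (4 * t) ^ (d + 2) / (r ^ 2) ^ (d + 2)) / t ^ 2 := by gcongr
    _ = (4 * Real.pi) ^ (-(d : ℝ) / 2) * (d + 2).factorial * 4 ^ (d + 2) *
          (t ^ (-(d : ℝ) / 2) * t ^ d) / r ^ (2 * d + 4) := by
      rw [mul_pow, pow_add t d 2, ← pow_mul]
      field_simp
      ring
    _ ≤ (4 * Real.pi) ^ (-(d : ℝ) / 2) * (d + 2).factorial * 4 ^ (d + 2) *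
          r ^ d / r ^ (2 * d + 4) := by rw [hhalf]; gcongr
    _ = _ := by
      rw [show 2 * d + 4 = d + (d + 4) by ring, pow_add]
      field_simp
      ring

end HeatKernel

section LogWeight

variable {t : ℝ}

lemma one_le_log_exp_one_add_inv (ht : 0 < t) : 1 ≤ Real.log (Real.exp 1 + 1 / t) := by
  rw [Real.le_log_iff_exp_le (by positivity)]
  linarith [one_div_pos.2 ht]

lemma logWeight_nonneg (t : ℝ) : 0 ≤ logWeight t := by
  unfold logWeight; positivity

lemma logWeight_le (ht : 0 < t) : logWeight t ≤ (t ^ 2)⁻¹ := by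
  have hlog := one_le_log_exp_one_add_inv ht
  unfold logWeight
  gcongr
  exact le_mul_of_one_le_right (by positivity) (one_le_pow₀ hlog)

lemma logWeight_le_of_le {r : ℝ} (ht : 0 < t) (htr : t ≤ r) (hr1 : r < 1) :
    logWeight t ≤ (Real.log (1 / r) ^ 2)⁻¹ * (t ^ 2)⁻¹ := by
  have hr0 : 0 < r := ht.trans_le htr
  have hL : 0 < Real.log (1 / r) := Real.log_pos (by rw [lt_div_iff₀ hr0]; linarith)
  have hlog : Real.log (1 / r) ≤ Real.log (Real.exp 1 + 1 / t) :=
    Real.log_le_log (by positivity) (by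
      linarith [Real.exp_pos 1, one_div_le_one_div_of_le ht htr])
  rw [← mul_inv, mul_comm]
  unfold logWeight
  gcongr

lemma le_logWeight (ht : 0 < t) (ht1 : t ≤ 1) :
    (t ^ 2 * (2 + Real.log (1 / t)) ^ 2)⁻¹ ≤ logWeight t := by
  have he : 2 ≤ Real.exp 1 := by linarith [Real.add_one_le_exp 1]
  have hlog : Real.log (Real.exp 1 + 1 / t) ≤ 2 + Real.log (1 / t) := by
    rw [← Real.log_exp 2, ← Real.log_mul (Real.exp_pos 2).ne' (by positivity)]
    refine Real.log_le_log (by positivity) ?_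
    rw [show (2 : ℝ) = 1 + 1 by norm_num, Real.exp_add, mul_one_div, le_div_iff₀ ht, add_mul,
      one_div_mul_cancel ht.ne']
    nlinarith
  have hlog1 := one_le_log_exp_one_add_inv ht
  unfold logWeight
  gcongr

end LogWeight

lemma setLIntegral_Ioi_rpow_neg {a q : ℝ} (ha : 0 < a) (hq : 1 < q) :
    ∫⁻ t in Ioi a, ENNReal.ofReal (t ^ (-q)) = ENNReal.ofReal (a ^ (1 - q) / (q - 1)) := by
  rw [← ofReal_integral_eq_lintegral_ofReal (integrableOn_Ioi_rpow_of_lt (by linarith) ha)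
      (ae_restrict_of_forall_mem measurableSet_Ioi fun t ht => Real.rpow_nonneg (ha.trans ht).le _),
    integral_Ioi_rpow_of_lt (by linarith) ha, neg_div, ← div_neg]
  ring_nf

section Comparison

variable {α : Type*} [MeasurableSpace α] {μ ν : Measure α} {w f : α → ℝ≥0∞} {S : Set α}
  {c : ℝ≥0∞}

lemma setLIntegral_le_mul_setLIntegral_mul (hS : MeasurableSet S) (hw : Measurable w)
    (h : ∀ A, MeasurableSet A → A ⊆ S → μ A ≤ c * ∫⁻ a in A, w a ∂ν) :
    ∫⁻ a in S, f a ∂μ ≤ c * ∫⁻ a in S, w a * f a ∂ν := by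
  have hle : μ.restrict S ≤ c • (ν.withDensity w).restrict S := Measure.le_iff.2 fun A hA => by
    rw [Measure.restrict_apply hA, Measure.smul_apply, Measure.restrict_apply hA,
      withDensity_apply _ (hA.inter hS), smul_eq_mul]
    exact h _ (hA.inter hS) inter_subset_right
  calc ∫⁻ a in S, f a ∂μ ≤ ∫⁻ a, f a ∂(c • (ν.withDensity w).restrict S) :=
        lintegral_mono' hle le_rfl
    _ = c * ∫⁻ a, f a ∂((ν.restrict S).withDensity w) := by
      rw [lintegral_smul_measure, restrict_withDensity hS, smul_eq_mul]
    _ ≤ c * ∫⁻ a in S, w a * f a ∂ν :=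
      mul_le_mul_right (lintegral_withDensity_le_lintegral_mul _ hw f) c

lemma mul_setLIntegral_mul_le_setLIntegral (hS : MeasurableSet S) (hw : Measurable w)
    (hf : Measurable f) (h : ∀ A, MeasurableSet A → A ⊆ S → c * ∫⁻ a in A, w a ∂ν ≤ μ A) :
    c * ∫⁻ a in S, w a * f a ∂ν ≤ ∫⁻ a in S, f a ∂μ := by
  have hle : c • (ν.withDensity w).restrict S ≤ μ.restrict S := Measure.le_iff.2 fun A hA => by
    rw [Measure.restrict_apply hA, Measure.smul_apply, Measure.restrict_apply hA,
      withDensity_apply _ (hA.inter hS), smul_eq_mul]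
    exact h _ (hA.inter hS) inter_subset_right
  calc c * ∫⁻ a in S, w a * f a ∂ν = c * ∫⁻ a, f a ∂((ν.restrict S).withDensity w) := by
        rw [lintegral_withDensity_eq_lintegral_mul _ hw hf]
        rfl
    _ = ∫⁻ a, f a ∂(c • (ν.withDensity w).restrict S) := by
      rw [lintegral_smul_measure, restrict_withDensity hS, smul_eq_mul]
    _ ≤ ∫⁻ a in S, f a ∂μ := lintegral_mono' hle le_rfl

end Comparison

lemma measurable_heatKernel (d : ℕ) (r : ℝ) : Measurable fun t => heatKernel d t r := by
  unfold heatKernel; fun_prop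

lemma measurable_logWeight : Measurable logWeight := by
  unfold logWeight; fun_prop

lemma setLIntegral_heatKernel_div_sq_le (d : ℕ) {r : ℝ} (hr : 0 < r) :
    ∫⁻ t in Ioi 0, ENNReal.ofReal (heatKernel d t r / t ^ 2) ≤
      ENNReal.ofReal ((4 * Real.pi) ^ (-(d : ℝ) / 2) * ((d + 2).factorial * 4 ^ (d + 2) + 1) *
        (r ^ ((d : ℝ) + 2))⁻¹) := by
  set A := (4 * Real.pi) ^ (-(d : ℝ) / 2)
  have hA : 0 ≤ A := by positivity
  have hd : (0 : ℝ) ≤ d := d.cast_nonneg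
  have hr2 : 0 < r ^ 2 := by positivity
  have hsmall : ∫⁻ t in Ioc 0 (r ^ 2), ENNReal.ofReal (heatKernel d t r / t ^ 2) ≤
      ENNReal.ofReal (A * (d + 2).factorial * 4 ^ (d + 2) * (r ^ (d + 2))⁻¹) := by
    calc ∫⁻ t in Ioc 0 (r ^ 2), ENNReal.ofReal (heatKernel d t r / t ^ 2)
        ≤ ∫⁻ t in Ioc 0 (r ^ 2),
            ENNReal.ofReal (A * (d + 2).factorial * 4 ^ (d + 2) / r ^ (d + 4)) :=
          setLIntegral_mono' measurableSet_Ioc fun t ht =>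
            ENNReal.ofReal_le_ofReal (heatKernel_div_sq_le_of_le_sq d hr ht.1 ht.2)
      _ = ENNReal.ofReal (A * (d + 2).factorial * 4 ^ (d + 2) / r ^ (d + 4) * r ^ 2) := by
        rw [setLIntegral_const, Real.volume_Ioc, sub_zero, ENNReal.ofReal_mul (by positivity)]
      _ = _ := by
        congr 1
        field_simp
        ring
  have hlarge : ∫⁻ t in Ioi (r ^ 2), ENNReal.ofReal (heatKernel d t r / t ^ 2) ≤
      ENNReal.ofReal (A * (r ^ (d + 2))⁻¹) := by
    calc ∫⁻ t in Ioi (r ^ 2), ENNReal.ofReal (heatKernel d t r / t ^ 2)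
        ≤ ∫⁻ t in Ioi (r ^ 2), ENNReal.ofReal A * ENNReal.ofReal (t ^ (-((d : ℝ) / 2 + 2))) :=
          setLIntegral_mono' measurableSet_Ioi fun t ht => by
            rw [← ENNReal.ofReal_mul hA]
            exact ENNReal.ofReal_le_ofReal (heatKernel_div_sq_le d (hr2.trans ht))
      _ = ENNReal.ofReal (A * ((r ^ 2) ^ (1 - ((d : ℝ) / 2 + 2)) / ((d : ℝ) / 2 + 2 - 1))) := by
        rw [lintegral_const_mul' _ _ ENNReal.ofReal_ne_top,
          setLIntegral_Ioi_rpow_neg hr2 (by linarith),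
          ENNReal.ofReal_mul hA]
      _ ≤ ENNReal.ofReal (A * (r ^ (d + 2))⁻¹) := by
        refine ENNReal.ofReal_le_ofReal (mul_le_mul_of_nonneg_left ?_ hA)
        have hpow : (r ^ 2) ^ (1 - ((d : ℝ) / 2 + 2)) = (r ^ (d + 2))⁻¹ := by
          rw [← Real.rpow_natCast r 2, ← Real.rpow_mul hr.le, ← Real.rpow_natCast,
            ← Real.rpow_neg hr.le]
          push_cast
          ring_nf
        rw [hpow]
        exact div_le_self (by positivity) (by linarith)
  rw [← Ioc_union_Ioi_eq_Ioi hr2.le, lintegral_union measurableSet_Ioi Ioc_disjoint_Ioi_same]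
  calc _ ≤ ENNReal.ofReal (A * (d + 2).factorial * 4 ^ (d + 2) * (r ^ (d + 2))⁻¹) +
        ENNReal.ofReal (A * (r ^ (d + 2))⁻¹) := add_le_add hsmall hlarge
    _ = _ := by
      have hpow : r ^ ((d : ℝ) + 2) = r ^ (d + 2) := by norm_cast
      rw [← ENNReal.ofReal_add (by positivity) (by positivity), hpow]
      ring_nf

lemma inv_rpow_le_mul_inv_rpow_mul_inv_log_sq (d : ℕ) {r : ℝ} (hr0 : 0 < r) (hr1 : r < 1) :
    (r ^ ((d : ℝ) / 2 + 1))⁻¹ ≤ 4 * (r ^ ((d : ℝ) + 2))⁻¹ * (Real.log (1 / r) ^ 2)⁻¹ := by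
  have ha : 1 ≤ (d : ℝ) / 2 + 1 := by have : (0 : ℝ) ≤ d := d.cast_nonneg; linarith
  have hL : 0 < Real.log (1 / r) := Real.log_pos (by rw [lt_div_iff₀ hr0]; linarith)
  have hx : 0 < r ^ ((d : ℝ) / 2 + 1) := Real.rpow_pos_of_pos hr0 _
  have hsq : r ^ ((d : ℝ) + 2) = r ^ ((d : ℝ) / 2 + 1) * r ^ ((d : ℝ) / 2 + 1) := by
    rw [← Real.rpow_add hr0]; ring_nf
  have hbound : r ^ ((d : ℝ) / 2 + 1) * Real.log (1 / r) ^ 2 ≤ 4 :=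
    (Real.rpow_mul_log_inv_sq_le hr0 hr1.le (by linarith)).trans
      (div_le_self (by norm_num) (one_le_pow₀ ha))
  calc (r ^ ((d : ℝ) / 2 + 1))⁻¹
      = r ^ ((d : ℝ) / 2 + 1) * Real.log (1 / r) ^ 2 *
          ((r ^ ((d : ℝ) + 2))⁻¹ * (Real.log (1 / r) ^ 2)⁻¹) := by
        rw [hsq]; field_simp
    _ ≤ 4 * ((r ^ ((d : ℝ) + 2))⁻¹ * (Real.log (1 / r) ^ 2)⁻¹) :=
        mul_le_mul_of_nonneg_right hbound (by positivity)
    _ = 4 * (r ^ ((d : ℝ) + 2))⁻¹ * (Real.log (1 / r) ^ 2)⁻¹ := (mul_assoc _ _ _).symm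

lemma le_logWeight_mul_heatKernel (d : ℕ) {r t : ℝ} (hr : 0 < r) (hL : 1 ≤ Real.log (1 / r))
    (hrt : r ^ 2 < t) (ht : t ≤ 2 * r ^ 2) (ht1 : t ≤ 1) :
    ((2 * r ^ 2) ^ 2 * (4 * Real.log (1 / r)) ^ 2)⁻¹ *
        ((4 * Real.pi * (2 * r ^ 2)) ^ (-(d : ℝ) / 2) * Real.exp (-(1 / 4))) ≤
      logWeight t * heatKernel d t r := by
  have hr2 : 0 < r ^ 2 := by positivity
  have ht0 : 0 < t := hr2.trans hrt
  have hlog : Real.log (1 / t) ≤ 2 * Real.log (1 / r) := by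
    rw [← Real.log_rpow (by positivity), Real.rpow_two, one_div_pow]
    exact Real.log_le_log (by positivity) (one_div_le_one_div_of_le hr2 hrt.le)
  have hlog0 : 0 ≤ Real.log (1 / t) := Real.log_nonneg (by rw [le_div_iff₀ ht0]; linarith)
  have hw : ((2 * r ^ 2) ^ 2 * (4 * Real.log (1 / r)) ^ 2)⁻¹ ≤ logWeight t := by
    refine le_trans ?_ (le_logWeight ht0 ht1)
    gcongr
    linarith
  exact mul_le_mul hw (le_heatKernel d ht0 hrt.le ht) (by positivity) (logWeight_nonneg t)

lemma le_setLIntegral_heatKernel (d : ℕ) (μ : Measure ℝ) {δ c r : ℝ} (hδ1 : δ ≤ 1) (hc : 0 ≤ c)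
    (hlow : ∀ A : Set ℝ, MeasurableSet A → A ⊆ Ioc 0 δ →
      ENNReal.ofReal c * ∫⁻ t in A, ENNReal.ofReal (logWeight t) ≤ μ A)
    (hr : 0 < r) (hL : 1 ≤ Real.log (1 / r)) (hrδ : 2 * r ^ 2 ≤ δ) :
    ENNReal.ofReal (c * (Real.exp (-(1 / 4)) * (8 * Real.pi) ^ (-(d : ℝ) / 2) / 64) *
        (r ^ ((d : ℝ) + 2))⁻¹ * (Real.log (1 / r) ^ 2)⁻¹) ≤
      ∫⁻ t in Ioi 0, ENNReal.ofReal (heatKernel d t r) ∂μ := by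
  set L := Real.log (1 / r)
  set S := Ioc (r ^ 2) (2 * r ^ 2)
  have hr2 : 0 < r ^ 2 := by positivity
  have hSδ : S ⊆ Ioc 0 δ := fun t ht => ⟨hr2.trans ht.1, ht.2.trans hrδ⟩
  set m := ((2 * r ^ 2) ^ 2 * (4 * L) ^ 2)⁻¹ *
    ((4 * Real.pi * (2 * r ^ 2)) ^ (-(d : ℝ) / 2) * Real.exp (-(1 / 4))) with hm_def
  have hm : ∀ t ∈ S, ENNReal.ofReal m ≤
      ENNReal.ofReal (logWeight t) * ENNReal.ofReal (heatKernel d t r) := fun t ht => by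
    rw [← ENNReal.ofReal_mul (logWeight_nonneg t)]
    exact ENNReal.ofReal_le_ofReal
      (le_logWeight_mul_heatKernel d hr hL ht.1 ht.2 ((ht.2.trans hrδ).trans hδ1))
  have hscale : (4 * Real.pi * (2 * r ^ 2)) ^ (-(d : ℝ) / 2) =
      (8 * Real.pi) ^ (-(d : ℝ) / 2) * (r ^ d)⁻¹ := by
    rw [show 4 * Real.pi * (2 * r ^ 2) = 8 * Real.pi * r ^ 2 by ring,
      Real.mul_rpow (by positivity) hr2.le, ← Real.rpow_natCast r 2, ← Real.rpow_mul hr.le,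
      ← Real.rpow_natCast r d, ← Real.rpow_neg hr.le]
    ring_nf
  calc ENNReal.ofReal (c * (Real.exp (-(1 / 4)) * (8 * Real.pi) ^ (-(d : ℝ) / 2) / 64) *
        (r ^ ((d : ℝ) + 2))⁻¹ * (L ^ 2)⁻¹)
      = ENNReal.ofReal c * (ENNReal.ofReal m * ENNReal.ofReal (2 * r ^ 2 - r ^ 2)) := by
        have hpow : r ^ ((d : ℝ) + 2) = r ^ (d + 2) := by norm_cast
        have hL0 : 0 < L := by linarith
        rw [← ENNReal.ofReal_mul (by positivity), ← ENNReal.ofReal_mul hc, hpow, hm_def, hscale]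
        congr 1
        field_simp
        ring
    _ = ENNReal.ofReal c * ∫⁻ _ in S, ENNReal.ofReal m := by
        rw [setLIntegral_const, Real.volume_Ioc]
    _ ≤ ENNReal.ofReal c *
          ∫⁻ t in S, ENNReal.ofReal (logWeight t) * ENNReal.ofReal (heatKernel d t r) :=
        mul_le_mul_right (setLIntegral_mono' measurableSet_Ioc hm) _
    _ ≤ ∫⁻ t in S, ENNReal.ofReal (heatKernel d t r) ∂μ :=
        mul_setLIntegral_mul_le_setLIntegral measurableSet_Ioc measurable_logWeight.ennreal_ofReal
          (measurable_heatKernel d r).ennreal_ofReal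
          fun A hA hAS => hlow A hA (hAS.trans hSδ)
    _ ≤ ∫⁻ t in Ioi 0, ENNReal.ofReal (heatKernel d t r) ∂μ :=
        lintegral_mono_set fun t ht => hr2.trans ht.1

lemma setLIntegral_Ioc_zero_logWeight_mul_heatKernel_le (d : ℕ) {r : ℝ} (hr : 0 < r)
    (hr1 : r < 1) :
    ∫⁻ t in Ioc 0 r, ENNReal.ofReal (logWeight t) * ENNReal.ofReal (heatKernel d t r) ≤
      ENNReal.ofReal ((4 * Real.pi) ^ (-(d : ℝ) / 2) * ((d + 2).factorial * 4 ^ (d + 2) + 1) *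
        (r ^ ((d : ℝ) + 2))⁻¹ * (Real.log (1 / r) ^ 2)⁻¹) := by
  set L := Real.log (1 / r)
  calc ∫⁻ t in Ioc 0 r, ENNReal.ofReal (logWeight t) * ENNReal.ofReal (heatKernel d t r)
      ≤ ∫⁻ t in Ioc 0 r, ENNReal.ofReal ((L ^ 2)⁻¹) *
          ENNReal.ofReal (heatKernel d t r / t ^ 2) :=
        setLIntegral_mono' measurableSet_Ioc fun t ht => by
          rw [← ENNReal.ofReal_mul (logWeight_nonneg t), ← ENNReal.ofReal_mul (by positivity)]
          refine ENNReal.ofReal_le_ofReal ?_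
          calc logWeight t * heatKernel d t r ≤ (L ^ 2)⁻¹ * (t ^ 2)⁻¹ * heatKernel d t r :=
                mul_le_mul_of_nonneg_right (logWeight_le_of_le ht.1 ht.2 hr1)
                  (heatKernel_nonneg d ht.1.le)
            _ = (L ^ 2)⁻¹ * (heatKernel d t r / t ^ 2) := by ring
    _ ≤ ENNReal.ofReal ((L ^ 2)⁻¹) *
          ∫⁻ t in Ioi 0, ENNReal.ofReal (heatKernel d t r / t ^ 2) := by
        rw [lintegral_const_mul' _ _ ENNReal.ofReal_ne_top]
        exact mul_le_mul_right (lintegral_mono_set Ioc_subset_Ioi_self) _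
    _ ≤ ENNReal.ofReal ((L ^ 2)⁻¹) *
          ENNReal.ofReal ((4 * Real.pi) ^ (-(d : ℝ) / 2) * ((d + 2).factorial * 4 ^ (d + 2) + 1) *
            (r ^ ((d : ℝ) + 2))⁻¹) :=
        mul_le_mul_right (setLIntegral_heatKernel_div_sq_le d hr) _
    _ = _ := by
        rw [← ENNReal.ofReal_mul (by positivity)]
        ring_nf

lemma setLIntegral_Ioc_logWeight_mul_heatKernel_le (d : ℕ) {δ r : ℝ} (hr : 0 < r)
    (hr1 : r < 1) :
    ∫⁻ t in Ioc r δ, ENNReal.ofReal (logWeight t) * ENNReal.ofReal (heatKernel d t r) ≤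
      ENNReal.ofReal ((4 * Real.pi) ^ (-(d : ℝ) / 2) * 4 *
        (r ^ ((d : ℝ) + 2))⁻¹ * (Real.log (1 / r) ^ 2)⁻¹) := by
  set A := (4 * Real.pi) ^ (-(d : ℝ) / 2)
  have hA : 0 ≤ A := by positivity
  have hd : (0 : ℝ) ≤ d := d.cast_nonneg
  calc ∫⁻ t in Ioc r δ, ENNReal.ofReal (logWeight t) * ENNReal.ofReal (heatKernel d t r)
      ≤ ∫⁻ t in Ioi r, ENNReal.ofReal A * ENNReal.ofReal (t ^ (-((d : ℝ) / 2 + 2))) := by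
        refine (lintegral_mono_set Ioc_subset_Ioi_self).trans
          (setLIntegral_mono' measurableSet_Ioi fun t ht => ?_)
        have ht0 : 0 < t := hr.trans ht
        rw [← ENNReal.ofReal_mul (logWeight_nonneg t), ← ENNReal.ofReal_mul hA]
        refine ENNReal.ofReal_le_ofReal ?_
        calc logWeight t * heatKernel d t r ≤ (t ^ 2)⁻¹ * heatKernel d t r :=
              mul_le_mul_of_nonneg_right (logWeight_le ht0) (heatKernel_nonneg d ht0.le)
          _ = heatKernel d t r / t ^ 2 := inv_mul_eq_div _ _
          _ ≤ A * t ^ (-((d : ℝ) / 2 + 2)) := heatKernel_div_sq_le d ht0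
    _ = ENNReal.ofReal (A * (r ^ (1 - ((d : ℝ) / 2 + 2)) / ((d : ℝ) / 2 + 2 - 1))) := by
        rw [lintegral_const_mul' _ _ ENNReal.ofReal_ne_top,
          setLIntegral_Ioi_rpow_neg hr (by linarith), ENNReal.ofReal_mul hA]
    _ ≤ _ := by
        refine ENNReal.ofReal_le_ofReal ?_
        rw [mul_assoc, mul_assoc, ← mul_assoc 4]
        refine mul_le_mul_of_nonneg_left ?_ hA
        have hpow : r ^ (1 - ((d : ℝ) / 2 + 2)) = (r ^ ((d : ℝ) / 2 + 1))⁻¹ := by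
          rw [← Real.rpow_neg hr.le]; ring_nf
        rw [hpow]
        exact (div_le_self (by positivity) (by linarith)).trans
          (inv_rpow_le_mul_inv_rpow_mul_inv_log_sq d hr hr1)

lemma setLIntegral_logWeight_mul_heatKernel_le (d : ℕ) {δ r : ℝ} (hr : 0 < r)
    (hr1 : r < 1) (hrδ : r ≤ δ) :
    ∫⁻ t in Ioc 0 δ, ENNReal.ofReal (logWeight t) * ENNReal.ofReal (heatKernel d t r) ≤
      ENNReal.ofReal ((4 * Real.pi) ^ (-(d : ℝ) / 2) * ((d + 2).factorial * 4 ^ (d + 2) + 5) *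
        (r ^ ((d : ℝ) + 2))⁻¹ * (Real.log (1 / r) ^ 2)⁻¹) := by
  rw [← Ioc_union_Ioc_eq_Ioc hr.le hrδ,
    lintegral_union measurableSet_Ioc (Ioc_disjoint_Ioc_of_le le_rfl)]
  refine (add_le_add (setLIntegral_Ioc_zero_logWeight_mul_heatKernel_le d hr hr1)
    (setLIntegral_Ioc_logWeight_mul_heatKernel_le d hr hr1)).trans_eq ?_
  rw [← ENNReal.ofReal_add (by positivity) (by positivity)]
  ring_nf

lemma setLIntegral_Ioi_heatKernel_le (d : ℕ) (μ : Measure ℝ) {δ r : ℝ} (hδ : 0 < δ)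
    (hfin : μ (Ioi δ) < ⊤) :
    ∫⁻ t in Ioi δ, ENNReal.ofReal (heatKernel d t r) ∂μ ≤
      ENNReal.ofReal ((4 * Real.pi * δ) ^ (-(d : ℝ) / 2) * (μ (Ioi δ)).toReal) := by
  have hd : -(d : ℝ) / 2 ≤ 0 := by have : (0 : ℝ) ≤ d := d.cast_nonneg; linarith
  calc ∫⁻ t in Ioi δ, ENNReal.ofReal (heatKernel d t r) ∂μ
      ≤ ∫⁻ _ in Ioi δ, ENNReal.ofReal ((4 * Real.pi * δ) ^ (-(d : ℝ) / 2)) ∂μ :=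
        setLIntegral_mono' measurableSet_Ioi fun t ht => ENNReal.ofReal_le_ofReal <|
          (heatKernel_le d (hδ.trans ht)).trans
            (Real.rpow_le_rpow_of_nonpos (by positivity) (by gcongr; exact le_of_lt ht) hd)
    _ = _ := by
        rw [setLIntegral_const, ENNReal.ofReal_mul (by positivity), ENNReal.ofReal_toReal hfin.ne]

lemma setLIntegral_heatKernel_le (d : ℕ) (μ : Measure ℝ) {δ c r : ℝ} (hc : 0 ≤ c)
    (hhigh : ∀ A : Set ℝ, MeasurableSet A → A ⊆ Ioc 0 δ →
      μ A ≤ ENNReal.ofReal c * ∫⁻ t in A, ENNReal.ofReal (logWeight t))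
    (hfin : μ (Ioi δ) < ⊤) (hr : 0 < r) (hr1 : r < 1) (hrδ : r ≤ δ) :
    ∫⁻ t in Ioi 0, ENNReal.ofReal (heatKernel d t r) ∂μ ≤
      ENNReal.ofReal ((c * ((4 * Real.pi) ^ (-(d : ℝ) / 2) *
          ((d + 2).factorial * 4 ^ (d + 2) + 5)) +
        4 * ((4 * Real.pi * δ) ^ (-(d : ℝ) / 2) * (μ (Ioi δ)).toReal)) *
        (r ^ ((d : ℝ) + 2))⁻¹ * (Real.log (1 / r) ^ 2)⁻¹) := by
  set Φ := (r ^ ((d : ℝ) + 2))⁻¹ * (Real.log (1 / r) ^ 2)⁻¹ with hΦ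
  have hδ : 0 < δ := hr.trans_le hrδ
  have hΦ_ge : 1 ≤ 4 * Φ := by
    refine le_trans ?_
      ((inv_rpow_le_mul_inv_rpow_mul_inv_log_sq d hr hr1).trans_eq (mul_assoc _ _ _))
    exact one_le_inv₀ (by positivity) |>.2 (Real.rpow_le_one hr.le hr1.le (by positivity))
  rw [← Ioc_union_Ioi_eq_Ioi hδ.le, lintegral_union measurableSet_Ioi Ioc_disjoint_Ioi_same]
  calc _ ≤ ENNReal.ofReal c * ENNReal.ofReal ((4 * Real.pi) ^ (-(d : ℝ) / 2) *
          ((d + 2).factorial * 4 ^ (d + 2) + 5) * Φ) +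
        ENNReal.ofReal ((4 * Real.pi * δ) ^ (-(d : ℝ) / 2) * (μ (Ioi δ)).toReal * (4 * Φ)) := by
        refine add_le_add ((setLIntegral_le_mul_setLIntegral_mul measurableSet_Ioc
          measurable_logWeight.ennreal_ofReal hhigh).trans
            (mul_le_mul_right ?_ _))
          ((setLIntegral_Ioi_heatKernel_le d μ hδ hfin).trans
            (ENNReal.ofReal_le_ofReal (le_mul_of_one_le_right (by positivity) hΦ_ge)))
        simpa only [Φ, mul_assoc] using
          setLIntegral_logWeight_mul_heatKernel_le d hr hr1 hrδ
    _ = _ := by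
        rw [← ENNReal.ofReal_mul hc, ← ENNReal.ofReal_add (by positivity) (by positivity), hΦ]
        ring_nf

theorem stmt14_general (d : ℕ) (μ : Measure ℝ)
    (δ c₁ c₂ : ℝ) (hδ0 : 0 < δ) (hδ1 : δ < 1) (hc₁ : 0 < c₁) (hc : c₁ ≤ c₂)
    (hlow : ∀ A : Set ℝ, MeasurableSet A → A ⊆ Set.Ioc 0 δ →
      ENNReal.ofReal c₁ *
          (∫⁻ t in A,
            ENNReal.ofReal ((t ^ 2 * Real.log (Real.exp 1 + 1 / t) ^ 2)⁻¹)) ≤ μ A)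
    (hhigh : ∀ A : Set ℝ, MeasurableSet A → A ⊆ Set.Ioc 0 δ →
      μ A ≤ ENNReal.ofReal c₂ *
          (∫⁻ t in A,
            ENNReal.ofReal ((t ^ 2 * Real.log (Real.exp 1 + 1 / t) ^ 2)⁻¹)))
    (hfin : μ (Set.Ioi δ) < ⊤)
    (j : ℝ → ℝ≥0∞)
    (hj : ∀ r : ℝ, j r = ∫⁻ t in Set.Ioi (0 : ℝ),
      ENNReal.ofReal
        ((4 * Real.pi * t) ^ (-(d : ℝ) / 2) * Real.exp (-r ^ 2 / (4 * t))) ∂μ) :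
    ∃ C₁ C₂ r₀ : ℝ, 0 < C₁ ∧ C₁ ≤ C₂ ∧ 0 < r₀ ∧ r₀ < 1 ∧
      ∀ r : ℝ, 0 < r → r ≤ r₀ →
        ENNReal.ofReal (C₁ * (r ^ ((d : ℝ) + 2))⁻¹ * (Real.log (1 / r) ^ 2)⁻¹) ≤ j r ∧
        j r ≤ ENNReal.ofReal (C₂ * (r ^ ((d : ℝ) + 2))⁻¹ * (Real.log (1 / r) ^ 2)⁻¹) := by
  set C₁ := c₁ * (Real.exp (-(1 / 4)) * (8 * Real.pi) ^ (-(d : ℝ) / 2) / 64)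
  set C₂ := c₂ * ((4 * Real.pi) ^ (-(d : ℝ) / 2) * ((d + 2).factorial * 4 ^ (d + 2) + 5)) +
    4 * ((4 * Real.pi * δ) ^ (-(d : ℝ) / 2) * (μ (Ioi δ)).toReal)
  have hexp : Real.exp (-1) < 1 := Real.exp_lt_one_iff.2 (by norm_num)
  refine ⟨C₁, max C₁ C₂, min (Real.exp (-1)) (δ / 2), by positivity, le_max_left _ _,
    lt_min (Real.exp_pos _) (by linarith), (min_le_left _ _).trans_lt hexp, fun r hr hr₀ => ?_⟩
  have hre : r ≤ Real.exp (-1) := hr₀.trans (min_le_left _ _)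
  have hrδ : r ≤ δ / 2 := hr₀.trans (min_le_right _ _)
  have hr1 : r < 1 := hre.trans_lt hexp
  have hL : 1 ≤ Real.log (1 / r) := by
    rw [Real.le_log_iff_exp_le (by positivity), le_div_iff₀ hr]
    calc Real.exp 1 * r ≤ Real.exp 1 * Real.exp (-1) := by gcongr
      _ = 1 := by rw [← Real.exp_add]; norm_num
  rw [hj r]
  refine ⟨le_setLIntegral_heatKernel d μ hδ1.le hc₁.le hlow hr hL (by nlinarith), ?_⟩
  refine (setLIntegral_heatKernel_le d μ (hc₁.le.trans hc) hhigh hfin hr hr1 (by linarith)).trans ?_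
  refine ENNReal.ofReal_le_ofReal ?_
  gcongr
  exact le_max_right _ _

theorem stmt14 (d : ℕ) (hd : 1 ≤ d) (μ : Measure ℝ)
    (δ c₁ c₂ : ℝ) (hδ0 : 0 < δ) (hδ1 : δ < 1) (hc₁ : 0 < c₁) (hc : c₁ ≤ c₂)
    (hlow : ∀ A : Set ℝ, MeasurableSet A → A ⊆ Set.Ioc 0 δ →
      ENNReal.ofReal c₁ *
          (∫⁻ t in A,
            ENNReal.ofReal ((t ^ 2 * Real.log (Real.exp 1 + 1 / t) ^ 2)⁻¹)) ≤ μ A)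
    (hhigh : ∀ A : Set ℝ, MeasurableSet A → A ⊆ Set.Ioc 0 δ →
      μ A ≤ ENNReal.ofReal c₂ *
          (∫⁻ t in A,
            ENNReal.ofReal ((t ^ 2 * Real.log (Real.exp 1 + 1 / t) ^ 2)⁻¹)))
    (hfin : μ (Set.Ioi δ) < ⊤)
    (j : ℝ → ℝ≥0∞)
    (hj : ∀ r : ℝ, j r = ∫⁻ t in Set.Ioi (0 : ℝ),
      ENNReal.ofReal
        ((4 * Real.pi * t) ^ (-(d : ℝ) / 2) * Real.exp (-r ^ 2 / (4 * t))) ∂μ) :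
    ∃ C₁ C₂ r₀ : ℝ, 0 < C₁ ∧ C₁ ≤ C₂ ∧ 0 < r₀ ∧ r₀ < 1 ∧
      ∀ r : ℝ, 0 < r → r ≤ r₀ →
        ENNReal.ofReal (C₁ * (r ^ ((d : ℝ) + 2))⁻¹ * (Real.log (1 / r) ^ 2)⁻¹) ≤ j r ∧
        j r ≤ ENNReal.ofReal (C₂ * (r ^ ((d : ℝ) + 2))⁻¹ * (Real.log (1 / r) ^ 2)⁻¹) :=
  stmt14_general d μ δ c₁ c₂ hδ0 hδ1 hc₁ hc hlow hhigh hfin j hj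
end

section
/- Fix β ∈ (0,2]. Define φ₁ : (0,∞) → ℝ by φ₁(λ) = log(1 + λ^{β/2}) and, recursively, φ_{n+1} = φ_n ∘ φ₁. Then for every n ≥ 1 there exist constants 0 < c₁ ≤ c₂ and Λ > 0 (depending on n and β) such that for all λ ≥ Λ: (i) c₁·log^{(n)}(λ) ≤ φ_n(λ) ≤ c₂·log^{(n)}(λ), and (ii) c₁ ≤ φ_n'(λ)·λ·∏_{k=1}^{n-1} log^{(k)}(λ) ≤ c₂, where log^{(k)} denotes the k-fold composition of the natural logarithm (and the product is empty, i.e. equal to 1, when n = 1), and Λ is large enough that log^{(k)}(λ) > 0 for all 1 ≤ k ≤ n and λ ≥ Λ. -/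
open Real

/-- Iterated geometric stable Laplace exponents: `phiIter β 0 = id`,
`phiIter β (n+1) = phiIter β n ∘ φ₁` where `φ₁(λ) = log(1 + λ^{β/2})`. -/
noncomputable def phiIter (β : ℝ) : ℕ → ℝ → ℝ
  | 0, l => l
  | n + 1, l => phiIter β n (Real.log (1 + l ^ (β / 2)))

noncomputable def Qp (m : ℕ) (x : ℝ) : ℝ := ∏ k ∈ Finset.range m, Real.log^[k] x

lemma Qp_succ' (m : ℕ) (y : ℝ) : Qp (m + 1) y = Qp m (Real.log y) * y := by
  rw [Qp, Finset.prod_range_succ', Qp]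
  simp [Function.iterate_succ_apply]

lemma Qp_succ (m : ℕ) (x : ℝ) : Qp (m + 1) x = Qp m x * Real.log^[m] x :=
  Finset.prod_range_succ _ _

lemma prodIcc (m : ℕ) (y : ℝ) :
    ∏ k ∈ Finset.Icc 1 m, Real.log^[k] y = Qp m (Real.log y) := by
  induction m with
  | zero => simp [Qp]
  | succ m ih =>
      rw [Finset.prod_Icc_succ_top (Nat.succ_le_succ (Nat.zero_le m)), ih, Qp_succ,
        Function.iterate_succ_apply]

lemma logIterOne : ∀ m : ℕ, ∃ E : ℝ, 1 ≤ E ∧ ∀ x : ℝ, E ≤ x → ∀ k, k ≤ m → 1 ≤ Real.log^[k] x := by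
  intro m
  induction m with
  | zero =>
      refine ⟨1, le_refl 1, fun x hx k hk => ?_⟩
      interval_cases k
      simpa using hx
  | succ m ih =>
      obtain ⟨E, hE, h⟩ := ih
      refine ⟨Real.exp E, Real.one_le_exp (by linarith), fun x hx k hk => ?_⟩
      have hx0 : 0 < x := lt_of_lt_of_le (Real.exp_pos E) hx
      match k with
      | 0 => simpa using le_trans (Real.one_le_exp (by linarith)) hx
      | k + 1 =>
          rw [Function.iterate_succ_apply]
          exact h (Real.log x) ((Real.le_log_iff_exp_le hx0).2 hx) k (Nat.succ_le_succ_iff.1 hk)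

lemma lemC (m : ℕ) : ∀ a b : ℝ, 0 < a → a ≤ b →
    ∃ A B Λ : ℝ, 0 < A ∧ A ≤ B ∧ 1 ≤ Λ ∧ ∀ x : ℝ, Λ ≤ x →
      (1 ≤ Real.log^[m] x ∧ 1 ≤ Qp m x) ∧
      ∀ μ : ℝ, a * x ≤ μ → μ ≤ b * x →
        (A * Real.log^[m] x ≤ Real.log^[m] μ ∧ Real.log^[m] μ ≤ B * Real.log^[m] x) ∧
        (A * Qp m x ≤ Qp m μ ∧ Qp m μ ≤ B * Qp m x) := by
  induction m with
  | zero =>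
      intro a b ha hab
      refine ⟨min a 1, max b 1, 1, lt_min ha one_pos,
        le_trans (min_le_right _ _) (le_max_right _ _), le_refl 1, fun x hx => ?_⟩
      have hx0 : (0:ℝ) < x := lt_of_lt_of_le one_pos hx
      refine ⟨⟨by simpa using hx, by simp [Qp]⟩, fun μ h1 h2 => ?_⟩
      simp only [Function.iterate_zero_apply, Qp, Finset.range_zero, Finset.prod_empty]
      refine ⟨⟨?_, ?_⟩, ?_, ?_⟩
      · calc min a 1 * x ≤ a * x := mul_le_mul_of_nonneg_right (min_le_left _ _) hx0.le
          _ ≤ μ := h1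
      · calc μ ≤ b * x := h2
          _ ≤ max b 1 * x := mul_le_mul_of_nonneg_right (le_max_left _ _) hx0.le
      · simpa using min_le_right a 1
      · simpa using le_max_right b 1
  | succ m ih =>
      intro a b ha hab
      have hb : 0 < b := lt_of_lt_of_le ha hab
      obtain ⟨A, B, Λ, hA, hAB, hΛ, H⟩ := ih (1/2) 2 (by norm_num) (by norm_num)
      have hB : 0 < B := lt_of_lt_of_le hA hAB
      refine ⟨min A (a * A), max B (b * B), Real.exp (2 * |Real.log a| + |Real.log b| + Λ),
        lt_min hA (by positivity), ?_, Real.one_le_exp (by positivity), fun x hx => ?_⟩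
      · exact le_trans (min_le_left _ _) (le_trans hAB (le_max_left _ _))
      · have hx0 : 0 < x := lt_of_lt_of_le (Real.exp_pos _) hx
        have hx1 : 1 ≤ x := le_trans (Real.one_le_exp (by positivity)) hx
        have hlx : 2 * |Real.log a| + |Real.log b| + Λ ≤ Real.log x :=
          (Real.le_log_iff_exp_le hx0).2 hx
        have hlxΛ : Λ ≤ Real.log x := by
          have := abs_nonneg (Real.log a); have := abs_nonneg (Real.log b); linarith
        obtain ⟨⟨hone, honeQ⟩, Hμ⟩ := H (Real.log x) hlxΛ
        constructor
        · constructor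
          · rw [Function.iterate_succ_apply]; exact hone
          · rw [Qp_succ']; nlinarith
        · intro μ h1 h2
          have hμ0 : 0 < μ := lt_of_lt_of_le (by positivity) h1
          have hlogμ1 : Real.log a + Real.log x ≤ Real.log μ := by
            rw [← Real.log_mul ha.ne' hx0.ne']
            exact Real.log_le_log (by positivity) h1
          have hlogμ2 : Real.log μ ≤ Real.log b + Real.log x := by
            rw [← Real.log_mul hb.ne' hx0.ne']
            exact Real.log_le_log hμ0 h2
          have c1 : 1/2 * Real.log x ≤ Real.log μ := by
            have := neg_abs_le (Real.log a)
            have := abs_nonneg (Real.log b)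
            linarith
          have c2 : Real.log μ ≤ 2 * Real.log x := by
            have := le_abs_self (Real.log b)
            have := abs_nonneg (Real.log a)
            linarith
          obtain ⟨⟨e1, e2⟩, f1, f2⟩ := Hμ (Real.log μ) c1 c2
          have hQx0 : (0:ℝ) ≤ Qp m (Real.log x) := by linarith
          have hQμ0 : (0:ℝ) < Qp m (Real.log μ) := lt_of_lt_of_le (by nlinarith) f1
          constructor
          · rw [Function.iterate_succ_apply, Function.iterate_succ_apply]
            constructor
            · calc min A (a * A) * Real.log^[m] (Real.log x)
                  ≤ A * Real.log^[m] (Real.log x) :=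
                    mul_le_mul_of_nonneg_right (min_le_left _ _) (by linarith)
                _ ≤ Real.log^[m] (Real.log μ) := e1
            · calc Real.log^[m] (Real.log μ) ≤ B * Real.log^[m] (Real.log x) := e2
                _ ≤ max B (b * B) * Real.log^[m] (Real.log x) :=
                    mul_le_mul_of_nonneg_right (le_max_left _ _) (by linarith)
          · rw [Qp_succ', Qp_succ']
            constructor
            · calc min A (a * A) * (Qp m (Real.log x) * x)
                  ≤ (a * A) * (Qp m (Real.log x) * x) :=
                    mul_le_mul_of_nonneg_right (min_le_right _ _)
                      (mul_nonneg hQx0 hx0.le)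
                _ = (A * Qp m (Real.log x)) * (a * x) := by ring
                _ ≤ Qp m (Real.log μ) * μ := mul_le_mul f1 h1 (by positivity) hQμ0.le
            · calc Qp m (Real.log μ) * μ
                  ≤ (B * Qp m (Real.log x)) * (b * x) :=
                    mul_le_mul f2 h2 hμ0.le (by positivity)
                _ = (b * B) * (Qp m (Real.log x) * x) := by ring
                _ ≤ max B (b * B) * (Qp m (Real.log x) * x) :=
                    mul_le_mul_of_nonneg_right (le_max_right _ _)
                      (mul_nonneg hQx0 hx0.le)

lemma g_deriv {β : ℝ} (hβ : 0 < β) {l : ℝ} (hl : 0 < l) :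
    HasDerivAt (fun x : ℝ => Real.log (1 + x ^ (β / 2)))
      (β / 2 * l ^ (β / 2 - 1) / (1 + l ^ (β / 2))) l := by
  have h1 : HasDerivAt (fun x : ℝ => x ^ (β / 2)) (β / 2 * l ^ (β / 2 - 1)) l :=
    Real.hasDerivAt_rpow_const (Or.inl hl.ne')
  have h2 : HasDerivAt (fun x : ℝ => 1 + x ^ (β / 2)) (β / 2 * l ^ (β / 2 - 1)) l :=
    h1.const_add 1
  exact h2.log (by positivity)

lemma one_le_rpow_aux {β l : ℝ} (hβ : 0 < β) (hl : 1 ≤ l) : 1 ≤ l ^ (β / 2) := by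
  have := Real.rpow_le_rpow (by norm_num : (0:ℝ) ≤ 1) hl (by positivity : (0:ℝ) ≤ β / 2)
  rwa [Real.one_rpow] at this

lemma t_bounds {β l : ℝ} (hβ : 0 < β) (hβ2 : β ≤ 2) (hl : 1 ≤ l) :
    β / 4 ≤ β / 2 * l ^ (β / 2 - 1) / (1 + l ^ (β / 2)) * l ∧
      β / 2 * l ^ (β / 2 - 1) / (1 + l ^ (β / 2)) * l ≤ β / 2 := by
  have hl0 : 0 < l := lt_of_lt_of_le one_pos hl
  have hs : 1 ≤ l ^ (β / 2) := one_le_rpow_aux hβ hl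
  have hkey : β / 2 * l ^ (β / 2 - 1) / (1 + l ^ (β / 2)) * l
      = β / 2 * l ^ (β / 2) / (1 + l ^ (β / 2)) := by
    rw [div_mul_eq_mul_div, mul_assoc, ← Real.rpow_add_one hl0.ne' (β / 2 - 1)]
    norm_num
  rw [hkey]
  constructor
  · rw [le_div_iff₀ (by positivity)]; nlinarith
  · rw [div_le_iff₀ (by positivity)]; nlinarith

lemma g_bounds {β l : ℝ} (hβ : 0 < β) (hβ2 : β ≤ 2) (hl : 2 ≤ l) :
    β / 2 * Real.log l ≤ Real.log (1 + l ^ (β / 2)) ∧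
      Real.log (1 + l ^ (β / 2)) ≤ 2 * Real.log l := by
  have hl0 : 0 < l := by linarith
  have hl1 : 1 ≤ l := by linarith
  have hs : 1 ≤ l ^ (β / 2) := one_le_rpow_aux hβ hl1
  have hlog2 : Real.log 2 ≤ Real.log l := Real.log_le_log (by norm_num) hl
  have hlogl : 0 ≤ Real.log l := Real.log_nonneg hl1
  constructor
  · have h1 : Real.log (l ^ (β / 2)) ≤ Real.log (1 + l ^ (β / 2)) :=
      Real.log_le_log (by positivity) (by linarith)
    rwa [Real.log_rpow hl0] at h1
  · have h2 : Real.log (1 + l ^ (β / 2)) ≤ Real.log (2 * l ^ (β / 2)) :=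
      Real.log_le_log (by positivity) (by linarith)
    rw [Real.log_mul (by norm_num) (by positivity), Real.log_rpow hl0] at h2
    have h3 : (0:ℝ) < 2 := by norm_num
    have hlog2' : Real.log 2 ≤ Real.log l := hlog2
    nlinarith

set_option maxHeartbeats 1600000 in
lemma main_aux (β : ℝ) (hβ0 : 0 < β) (hβ2 : β ≤ 2) :
    ∀ n : ℕ, 1 ≤ n →
    ∃ c₁ c₂ Λ : ℝ, 0 < c₁ ∧ c₁ ≤ c₂ ∧ 1 ≤ Λ ∧
      (∀ l : ℝ, Λ ≤ l → ∀ k, k ≤ n → 1 ≤ Real.log^[k] l) ∧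
      ∀ l : ℝ, Λ ≤ l →
        (c₁ * Real.log^[n] l ≤ phiIter β n l ∧ phiIter β n l ≤ c₂ * Real.log^[n] l) ∧
        ∃ d : ℝ, HasDerivAt (phiIter β n) d l ∧
          c₁ ≤ d * l * ∏ k ∈ Finset.Icc 1 (n - 1), Real.log^[k] l ∧
          d * l * ∏ k ∈ Finset.Icc 1 (n - 1), Real.log^[k] l ≤ c₂ := by
  intro n hn
  induction n, hn using Nat.le_induction with
  | base =>
      refine ⟨β / 4, β / 2 + 1, Real.exp 1, by positivity, by linarith, Real.one_le_exp (by norm_num), ?_, ?_⟩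
      · intro l hl k hk
        have hl0 : 0 < l := lt_of_lt_of_le (Real.exp_pos 1) hl
        interval_cases k
        · simpa using le_trans (Real.one_le_exp (by norm_num)) hl
        · simpa using (Real.le_log_iff_exp_le hl0).2 hl
      · intro l hl
        have hl0 : 0 < l := lt_of_lt_of_le (Real.exp_pos 1) hl
        have hl1 : 1 ≤ l := le_trans (Real.one_le_exp (by norm_num)) hl
        have hlog1 : 1 ≤ Real.log l := (Real.le_log_iff_exp_le hl0).2 hl
        have hs : 1 ≤ l ^ (β / 2) := one_le_rpow_aux hβ0 hl1
        have hphi : phiIter β 1 l = Real.log (1 + l ^ (β / 2)) := rfl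
        constructor
        · rw [hphi]
          simp only [Function.iterate_one]
          constructor
          · have h1 : Real.log (l ^ (β / 2)) ≤ Real.log (1 + l ^ (β / 2)) :=
              Real.log_le_log (by positivity) (by linarith)
            rw [Real.log_rpow hl0] at h1
            nlinarith
          · have h2 : Real.log (1 + l ^ (β / 2)) ≤ Real.log (2 * l ^ (β / 2)) :=
              Real.log_le_log (by positivity) (by linarith)
            rw [Real.log_mul (by norm_num) (by positivity), Real.log_rpow hl0] at h2
            have hlog2 : Real.log 2 ≤ Real.log l := Real.log_le_log (by norm_num) (by nlinarith [Real.add_one_le_exp (1:ℝ), hl])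
            nlinarith
        · refine ⟨β / 2 * l ^ (β / 2 - 1) / (1 + l ^ (β / 2)), ?_, ?_, ?_⟩
          · have heq : phiIter β 1 = fun x : ℝ => Real.log (1 + x ^ (β / 2)) := by
              funext x; rfl
            rw [heq]
            exact g_deriv hβ0 hl0
          · simp only [Nat.sub_self, Finset.Icc_self, Finset.Icc_eq_empty_of_lt (by norm_num : (1:ℕ) > 0)]
            obtain ⟨h1, h2⟩ := t_bounds hβ0 hβ2 hl1
            simpa using h1
          · obtain ⟨h1, h2⟩ := t_bounds hβ0 hβ2 hl1
            simpa using le_trans h2 (by linarith)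
  | succ n hn ih =>
      obtain ⟨c₁, c₂, Λ, hc₁, hc₁₂, hΛ, hposIH, hIH⟩ := ih
      obtain ⟨A, B, Λc, hA, hAB, hΛc, HC⟩ := lemC n (β / 2) 2 (by positivity) (by linarith)
      have hB : 0 < B := lt_of_lt_of_le hA hAB
      have hc₂ : 0 < c₂ := lt_of_lt_of_le hc₁ hc₁₂
      obtain ⟨E, hE, hEpos⟩ := logIterOne (n + 1)
      have he1 : 0 < Real.exp (2 * Λ / β) := Real.exp_pos _
      have he2 : 0 < Real.exp Λc := Real.exp_pos _
      refine ⟨min (c₁ * A) (c₁ * (β / 4) / B), max (c₂ * B) (c₂ * (β / 2) / A),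
        Real.exp (2 * Λ / β) + Real.exp Λc + E + 2, lt_min (by positivity) (by positivity), ?_, by linarith, ?_, ?_⟩
      · calc min (c₁ * A) (c₁ * (β / 4) / B) ≤ c₁ * A := min_le_left _ _
          _ ≤ c₂ * B := mul_le_mul hc₁₂ hAB hA.le hc₂.le
          _ ≤ max (c₂ * B) (c₂ * (β / 2) / A) := le_max_left _ _
      · intro l hl k hk
        exact hEpos l (by linarith) k hk
      · intro l hl
        have hexp1 : Real.exp (2 * Λ / β) ≤ l := by linarith
        have hexp2 : Real.exp Λc ≤ l := by linarith
        have hl2 : 2 ≤ l := by linarith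
        have hl0 : 0 < l := by linarith
        have hl1 : 1 ≤ l := by linarith
        have hloglΛ : 2 * Λ / β ≤ Real.log l := (Real.le_log_iff_exp_le hl0).2 hexp1
        have hloglc : Λc ≤ Real.log l := (Real.le_log_iff_exp_le hl0).2 hexp2
        obtain ⟨hgl, hgu⟩ := g_bounds hβ0 hβ2 hl2
        have hglΛ : Λ ≤ Real.log (1 + l ^ (β / 2)) := by
          have h : Λ ≤ β / 2 * Real.log l := by
            rw [div_le_iff₀ hβ0] at hloglΛ
            nlinarith
          linarith
        obtain ⟨⟨h1x, hQx1⟩, Hμ⟩ := HC (Real.log l) hloglc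
        obtain ⟨⟨e1, e2⟩, f1, f2⟩ := Hμ (Real.log (1 + l ^ (β / 2))) hgl hgu
        obtain ⟨⟨ha1, ha2⟩, d, hd, hd1, hd2⟩ := hIH (Real.log (1 + l ^ (β / 2))) hglΛ
        have hQg : Qp n (Real.log (1 + l ^ (β / 2)))
            = Qp (n - 1) (Real.log (Real.log (1 + l ^ (β / 2)))) * Real.log (1 + l ^ (β / 2)) := by
          have h := Qp_succ' (n - 1) (Real.log (1 + l ^ (β / 2)))
          rwa [Nat.sub_add_cancel hn] at h
        rw [prodIcc] at hd1 hd2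
        have hd1' : c₁ ≤ d * Qp n (Real.log (1 + l ^ (β / 2))) := by
          rw [hQg]; linarith [hd1]
        have hd2' : d * Qp n (Real.log (1 + l ^ (β / 2))) ≤ c₂ := by
          rw [hQg]; linarith [hd2]
        have hQgpos : 0 < Qp n (Real.log (1 + l ^ (β / 2))) :=
          lt_of_lt_of_le (mul_pos hA (lt_of_lt_of_le one_pos hQx1)) f1
        have hd0 : 0 < d := by
          by_contra h
          push_neg at h
          have : d * Qp n (Real.log (1 + l ^ (β / 2))) ≤ 0 :=
            mul_nonpos_iff.mpr (Or.inr ⟨h, hQgpos.le⟩)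
          linarith
        have hphisucc : phiIter β (n + 1) l = phiIter β n (Real.log (1 + l ^ (β / 2))) := rfl
        have hiterL : Real.log^[n + 1] l = Real.log^[n] (Real.log l) :=
          Function.iterate_succ_apply _ _ _
        constructor
        · rw [hphisucc, hiterL]
          constructor
          · calc min (c₁ * A) (c₁ * (β / 4) / B) * Real.log^[n] (Real.log l)
                ≤ (c₁ * A) * Real.log^[n] (Real.log l) :=
                  mul_le_mul_of_nonneg_right (min_le_left _ _) (by linarith)
              _ ≤ c₁ * Real.log^[n] (Real.log (1 + l ^ (β / 2))) := by
                  nlinarith [mul_le_mul_of_nonneg_left e1 hc₁.le]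
              _ ≤ phiIter β n (Real.log (1 + l ^ (β / 2))) := ha1
          · calc phiIter β n (Real.log (1 + l ^ (β / 2)))
                ≤ c₂ * Real.log^[n] (Real.log (1 + l ^ (β / 2))) := ha2
              _ ≤ (c₂ * B) * Real.log^[n] (Real.log l) := by
                  linarith [mul_le_mul_of_nonneg_left e2 hc₂.le]
              _ ≤ max (c₂ * B) (c₂ * (β / 2) / A) * Real.log^[n] (Real.log l) :=
                  mul_le_mul_of_nonneg_right (le_max_left _ _) (by linarith)
        · refine ⟨d * (β / 2 * l ^ (β / 2 - 1) / (1 + l ^ (β / 2))), ?_, ?_, ?_⟩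
          · have hg' := g_deriv hβ0 hl0
            have hcomp := HasDerivAt.comp l hd hg'
            have heq : phiIter β (n + 1)
                = (phiIter β n) ∘ (fun x : ℝ => Real.log (1 + x ^ (β / 2))) := by
              funext x; rfl
            rw [heq]
            exact hcomp
          · simp only [Nat.add_sub_cancel]
            rw [prodIcc]
            obtain ⟨htl, htu⟩ := t_bounds hβ0 hβ2 hl1
            have k1 : c₁ ≤ d * (B * Qp n (Real.log l)) := by
              linarith [mul_le_mul_of_nonneg_left f2 hd0.le]
            have k2 : c₁ * (β / 4)
                ≤ (d * (B * Qp n (Real.log l))) * (β / 2 * l ^ (β / 2 - 1) / (1 + l ^ (β / 2)) * l) :=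
              mul_le_mul k1 htl (by positivity) (mul_nonneg hd0.le (mul_nonneg hB.le (by linarith)))
            have hgoal : c₁ * (β / 4) / B
                ≤ d * (β / 2 * l ^ (β / 2 - 1) / (1 + l ^ (β / 2))) * l * Qp n (Real.log l) := by
              rw [div_le_iff₀ hB]
              linarith [k2]
            exact le_trans (min_le_right _ _) hgoal
          · simp only [Nat.add_sub_cancel]
            rw [prodIcc]
            obtain ⟨htl, htu⟩ := t_bounds hβ0 hβ2 hl1
            have k3 : d * (A * Qp n (Real.log l)) ≤ c₂ := by
              linarith [mul_le_mul_of_nonneg_left f1 hd0.le]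
            have k4 : (d * Qp n (Real.log l)) * (β / 2 * l ^ (β / 2 - 1) / (1 + l ^ (β / 2)) * l)
                ≤ (c₂ / A) * (β / 2) := by
              apply mul_le_mul ?_ htu (by linarith) (by positivity)
              rw [le_div_iff₀ hA]
              linarith [k3]
            have hfin : d * (β / 2 * l ^ (β / 2 - 1) / (1 + l ^ (β / 2))) * l * Qp n (Real.log l)
                ≤ c₂ * (β / 2) / A := by
              calc d * (β / 2 * l ^ (β / 2 - 1) / (1 + l ^ (β / 2))) * l * Qp n (Real.log l)
                  = (d * Qp n (Real.log l)) * (β / 2 * l ^ (β / 2 - 1) / (1 + l ^ (β / 2)) * l) := by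
                    ring
                _ ≤ (c₂ / A) * (β / 2) := k4
                _ = c₂ * (β / 2) / A := by ring
            exact le_trans hfin (le_max_right _ _)

theorem stmt16 (β : ℝ) (hβ0 : 0 < β) (hβ2 : β ≤ 2) (n : ℕ) (hn : 1 ≤ n) :
    ∃ c₁ c₂ Λ : ℝ, 0 < c₁ ∧ c₁ ≤ c₂ ∧ 0 < Λ ∧
      (∀ l : ℝ, Λ ≤ l → ∀ k : ℕ, 1 ≤ k → k ≤ n → 0 < Real.log^[k] l) ∧
      ∀ l : ℝ, Λ ≤ l →
        (c₁ * Real.log^[n] l ≤ phiIter β n l ∧ phiIter β n l ≤ c₂ * Real.log^[n] l) ∧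
        (c₁ ≤ deriv (phiIter β n) l * l * ∏ k ∈ Finset.Icc 1 (n - 1), Real.log^[k] l ∧
          deriv (phiIter β n) l * l * ∏ k ∈ Finset.Icc 1 (n - 1), Real.log^[k] l ≤ c₂) := by
  obtain ⟨c₁, c₂, Λ, hc₁, hc₁₂, hΛ, hpos, h⟩ := main_aux β hβ0 hβ2 n hn
  refine ⟨c₁, c₂, Λ, hc₁, hc₁₂, by linarith, ?_, ?_⟩
  · intro l hl k _ hk2
    exact lt_of_lt_of_le one_pos (hpos l hl k hk2)
  · intro l hl
    obtain ⟨hb, d, hd, hd1, hd2⟩ := h l hl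
    rw [hd.deriv]
    exact ⟨hb, hd1, hd2⟩
end
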